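/- arXiv:2202.09126 — 4 statements merged into one kernel-verified Lean document; each statement's English description precedes it below -/
import Mathlib

section
/- Let K_α be a smooth covector field on U which is a conformal Killing vector of g with factor Ω. Define ζ := ε n^α K_α and 𝒦_α := h^β_α K_β (so K_α = 𝒦_α + ζ n_α). Then the following three equations hold on U: (i) D_α 𝒦_β + D_β 𝒦_α + 2 ζ χ_{αβ} = 2 Ω h_{αβ}; (ii) h^α_ρ n^β ∇_β 𝒦_α = χ^β_ρ 𝒦_β + ε ζ φ^{−1} D_ρ φ − ε D_ρ ζ; (iii) φ^{−1} 𝒦^β D_β φ + n^α ∂_α ζ = Ω; where D_α 𝒦_β = h^λ_α h^ρ_β ∇_λ 𝒦_ρ, χ^β_ρ = g^{βλ} χ_{λρ}, and 𝒦^β = g^{βα} 𝒦_α. -/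
open scoped BigOperators

noncomputable section

variable {ι : Type*} [Fintype ι] [DecidableEq ι]

/-- Partial derivative of a scalar field in the coordinate direction `i`. -/
def pd (i : ι) (f : (ι → ℝ) → ℝ) (x : ι → ℝ) : ℝ :=
  fderiv ℝ f x (Pi.single i 1)

/-- Christoffel symbols `Γ^l_{μν}` of the metric `g`. -/
def christoffel (g : (ι → ℝ) → Matrix ι ι ℝ) (l μ ν : ι) (x : ι → ℝ) : ℝ :=
  (1 / 2) * ∑ ρ, (g x)⁻¹ l ρ *
    (pd μ (fun y => g y ρ ν) x + pd ν (fun y => g y ρ μ) x - pd ρ (fun y => g y μ ν) x)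

/-- Covariant derivative `∇_a K_b` of a covector field. -/
def covd1 (g : (ι → ℝ) → Matrix ι ι ℝ) (K : (ι → ℝ) → ι → ℝ) (a b : ι) (x : ι → ℝ) : ℝ :=
  pd a (fun y => K y b) x - ∑ l, christoffel g l a b x * K x l

/-- Covariant derivative `∇_a K_{bc}` of a symmetric 2-tensor field. -/
def covd2 (g : (ι → ℝ) → Matrix ι ι ℝ) (K : (ι → ℝ) → ι → ι → ℝ) (a b c : ι)
    (x : ι → ℝ) : ℝ :=
  pd a (fun y => K y b c) x - ∑ l, christoffel g l a b x * K x l c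
    - ∑ l, christoffel g l a c x * K x b l

/-- `g` is a smooth pseudo-Riemannian metric on `U`. -/
def IsMetricOn (U : Set (ι → ℝ)) (g : (ι → ℝ) → Matrix ι ι ℝ) : Prop :=
  (∀ i j, ContDiffOn ℝ (⊤ : ℕ∞) (fun x => g x i j) U) ∧
  (∀ x ∈ U, ∀ i j, g x i j = g x j i) ∧
  (∀ x ∈ U, IsUnit (g x).det)

/-- `K` is a conformal Killing covector field of `g` on `U` with factor `Ω`. -/
def IsCKV (U : Set (ι → ℝ)) (g : (ι → ℝ) → Matrix ι ι ℝ)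
    (K : (ι → ℝ) → ι → ℝ) (Ω : (ι → ℝ) → ℝ) : Prop :=
  ∀ x ∈ U, ∀ a b, covd1 g K a b x + covd1 g K b a x = 2 * Ω x * g x a b

/-- `K` is a conformal Killing tensor of `g` on `U` with factor `Ω`. -/
def IsCKT (U : Set (ι → ℝ)) (g : (ι → ℝ) → Matrix ι ι ℝ)
    (K : (ι → ℝ) → ι → ι → ℝ) (Ω : (ι → ℝ) → ι → ℝ) : Prop :=
  ∀ x ∈ U, ∀ a b c,
    covd2 g K a b c x + covd2 g K b c a x + covd2 g K c a b x =
      Ω x a * g x b c + Ω x b * g x c a + Ω x c * g x a b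

variable {m : ℕ}

/-- The lapse function `φ = |g^{00}|^{-1/2}`. -/
def lapse (g : (Fin (m + 2) → ℝ) → Matrix (Fin (m + 2)) (Fin (m + 2)) ℝ)
    (x : Fin (m + 2) → ℝ) : ℝ :=
  1 / Real.sqrt |(g x)⁻¹ 0 0|

/-- Unit normal covector `n_a = φ δ^0_a`. -/
def nCov (g : (Fin (m + 2) → ℝ) → Matrix (Fin (m + 2)) (Fin (m + 2)) ℝ)
    (x : Fin (m + 2) → ℝ) : Fin (m + 2) → ℝ :=
  fun a => if a = 0 then lapse g x else 0

/-- Unit normal vector `n^a = φ g^{a0}`. -/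
def nCon (g : (Fin (m + 2) → ℝ) → Matrix (Fin (m + 2)) (Fin (m + 2)) ℝ)
    (x : Fin (m + 2) → ℝ) : Fin (m + 2) → ℝ :=
  fun a => lapse g x * (g x)⁻¹ a 0

/-- Projector `h^a_b = δ^a_b − ε n^a n_b`. -/
def proj (g : (Fin (m + 2) → ℝ) → Matrix (Fin (m + 2)) (Fin (m + 2)) ℝ) (ε : ℝ)
    (x : Fin (m + 2) → ℝ) (a b : Fin (m + 2)) : ℝ :=
  (if a = b then (1 : ℝ) else 0) - ε * nCon g x a * nCov g x b

/-- Induced metric `h_{ab} = g_{ab} − ε n_a n_b`. -/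
def hInd (g : (Fin (m + 2) → ℝ) → Matrix (Fin (m + 2)) (Fin (m + 2)) ℝ) (ε : ℝ)
    (x : Fin (m + 2) → ℝ) (a b : Fin (m + 2)) : ℝ :=
  g x a b - ε * nCov g x a * nCov g x b

/-- Second fundamental form `χ_{ab} = h^l_a h^p_b ∇_l n_p`. -/
def sff (g : (Fin (m + 2) → ℝ) → Matrix (Fin (m + 2)) (Fin (m + 2)) ℝ) (ε : ℝ)
    (x : Fin (m + 2) → ℝ) (a b : Fin (m + 2)) : ℝ :=
  ∑ l, ∑ p, proj g ε x l a * proj g ε x p b * covd1 g (fun y => nCov g y) l p x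

/-- Tangential derivative of a scalar field: `D_a f = h^l_a ∂_l f`. -/
def Dscal (g : (Fin (m + 2) → ℝ) → Matrix (Fin (m + 2)) (Fin (m + 2)) ℝ) (ε : ℝ)
    (f : (Fin (m + 2) → ℝ) → ℝ) (a : Fin (m + 2)) (x : Fin (m + 2) → ℝ) : ℝ :=
  ∑ l, proj g ε x l a * pd l f x

/-- Adapted foliation by the slices `x^0 = const`:
`g^{00}` is nowhere zero on `U`, with constant sign `ε ∈ {+1, −1}`. -/
def AdaptedFoliation (U : Set (Fin (m + 2) → ℝ))
    (g : (Fin (m + 2) → ℝ) → Matrix (Fin (m + 2)) (Fin (m + 2)) ℝ) (ε : ℝ) : Prop :=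
  (ε = 1 ∨ ε = -1) ∧ ∀ x ∈ U, 0 < ε * (g x)⁻¹ 0 0

section Layer1

variable {ι : Type*} [Fintype ι] [DecidableEq ι]

lemma pd_congr {f h : (ι → ℝ) → ℝ} {x : ι → ℝ} (hfh : f =ᶠ[nhds x] h) (i : ι) :
    pd i f x = pd i h x := by
  unfold pd; rw [hfh.fderiv_eq]

lemma pd_const (i : ι) (c : ℝ) (x : ι → ℝ) : pd i (fun _ => c) x = 0 := by
  simp [pd]

lemma pd_add {f h : (ι → ℝ) → ℝ} {x : ι → ℝ} (hf : DifferentiableAt ℝ f x)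
    (hh : DifferentiableAt ℝ h x) (i : ι) :
    pd i (fun y => f y + h y) x = pd i f x + pd i h x := by
  unfold pd; rw [fderiv_fun_add hf hh]; simp

lemma pd_sub {f h : (ι → ℝ) → ℝ} {x : ι → ℝ} (hf : DifferentiableAt ℝ f x)
    (hh : DifferentiableAt ℝ h x) (i : ι) :
    pd i (fun y => f y - h y) x = pd i f x - pd i h x := by
  unfold pd; rw [fderiv_fun_sub hf hh]; simp

lemma pd_mul {f h : (ι → ℝ) → ℝ} {x : ι → ℝ} (hf : DifferentiableAt ℝ f x)
    (hh : DifferentiableAt ℝ h x) (i : ι) :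
    pd i (fun y => f y * h y) x = f x * pd i h x + h x * pd i f x := by
  unfold pd; rw [fderiv_fun_mul hf hh]; simp

lemma pd_const_mul {f : (ι → ℝ) → ℝ} {x : ι → ℝ} (hf : DifferentiableAt ℝ f x)
    (c : ℝ) (i : ι) :
    pd i (fun y => c * f y) x = c * pd i f x := by
  unfold pd; rw [fderiv_const_mul hf]; simp

lemma pd_sum {κ : Type*} {s : Finset κ} {f : κ → (ι → ℝ) → ℝ} {x : ι → ℝ}
    (hf : ∀ j ∈ s, DifferentiableAt ℝ (f j) x) (i : ι) :
    pd i (fun y => ∑ j ∈ s, f j y) x = ∑ j ∈ s, pd i (f j) x := by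
  unfold pd; rw [fderiv_fun_sum hf]; simp

lemma differentiableAt_finprod {κ : Type*} [DecidableEq κ] {s : Finset κ}
    {f : κ → (ι → ℝ) → ℝ} {x : ι → ℝ}
    (hf : ∀ j ∈ s, DifferentiableAt ℝ (f j) x) :
    DifferentiableAt ℝ (fun y => ∏ j ∈ s, f j y) x := by
  classical
  induction s using Finset.induction_on with
  | empty => simp
  | @insert a s ha ih =>
    simp only [Finset.prod_insert ha]
    exact (hf a (Finset.mem_insert_self a s)).mul
      (ih fun j hj => hf j (Finset.mem_insert_of_mem hj))

lemma differentiableAt_det {M : (ι → ℝ) → Matrix ι ι ℝ} {x : ι → ℝ}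
    (h : ∀ i j, DifferentiableAt ℝ (fun y => M y i j) x) :
    DifferentiableAt ℝ (fun y => (M y).det) x := by
  have e : (fun y => (M y).det)
      = fun y => ∑ σ : Equiv.Perm ι, ((Equiv.Perm.sign σ : ℤ) : ℝ) * ∏ i, M y (σ i) i := by
    funext y; rw [Matrix.det_apply']
  rw [e]
  exact DifferentiableAt.fun_sum fun σ _ =>
    (differentiableAt_finprod fun i _ => h (σ i) i).const_mul _

lemma differentiableAt_adjugate {M : (ι → ℝ) → Matrix ι ι ℝ} {x : ι → ℝ}
    (h : ∀ i j, DifferentiableAt ℝ (fun y => M y i j) x) (i j : ι) :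
    DifferentiableAt ℝ (fun y => (M y).adjugate i j) x := by
  have e : (fun y => (M y).adjugate i j)
      = fun y => ((M y).updateRow j (Pi.single i 1)).det := by
    funext y; rw [Matrix.adjugate_apply]
  rw [e]
  refine differentiableAt_det fun a b => ?_
  by_cases hab : a = j
  · subst hab; simp only [Matrix.updateRow_self]; exact differentiableAt_const _
  · simp only [Matrix.updateRow_apply, if_neg hab]; exact h a b

lemma differentiableAt_inv_entry {M : (ι → ℝ) → Matrix ι ι ℝ} {x : ι → ℝ}
    (h : ∀ i j, DifferentiableAt ℝ (fun y => M y i j) x)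
    (hdet : (M x).det ≠ 0) (i j : ι) :
    DifferentiableAt ℝ (fun y => (M y)⁻¹ i j) x := by
  have e : (fun y => (M y)⁻¹ i j)
      = fun y => ((M y).det)⁻¹ * (M y).adjugate i j := by
    funext y
    rw [Matrix.inv_def, Matrix.smul_apply, Ring.inverse_eq_inv, smul_eq_mul]
  rw [e]
  exact ((differentiableAt_det h).inv hdet).mul (differentiableAt_adjugate h i j)

end Layer1
set_option linter.unusedSectionVars false
set_option maxHeartbeats 1000000

section Layer2

variable {ι : Type*} [Fintype ι] [DecidableEq ι]

lemma sum_delta (a : ι) (f : ι → ℝ) : ∑ l, (if l = a then (1:ℝ) else 0) * f l = f a := by simp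

lemma sum_delta' (a : ι) (f : ι → ℝ) : ∑ l, (if a = l then (1:ℝ) else 0) * f l = f a := by simp

lemma sum_delta_r (a : ι) (f : ι → ℝ) : ∑ l, f l * (if l = a then (1:ℝ) else 0) = f a := by simp

lemma sum_delta_r' (a : ι) (f : ι → ℝ) : ∑ l, f l * (if a = l then (1:ℝ) else 0) = f a := by simp

variable {m : ℕ} {U : Set (Fin (m + 2) → ℝ)} (hUo : IsOpen U)
  {g : (Fin (m + 2) → ℝ) → Matrix (Fin (m + 2)) (Fin (m + 2)) ℝ}
  (hg : IsMetricOn U g) {ε : ℝ} (hfol : AdaptedFoliation U g ε)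
  {x : Fin (m + 2) → ℝ} (hx : x ∈ U)

include hUo hg hx

lemma evU {P : (Fin (m + 2) → ℝ) → Prop} (h : ∀ y ∈ U, P y) : ∀ᶠ y in nhds x, P y :=
  Filter.eventually_of_mem (hUo.mem_nhds hx) h

lemma dg (i j : Fin (m + 2)) : DifferentiableAt ℝ (fun y => g y i j) x :=
  ((hg.1 i j).contDiffAt (hUo.mem_nhds hx)).differentiableAt (by simp)

lemma gdet_ne : (g x).det ≠ 0 := (hg.2.2 x hx).ne_zero

lemma dGi (i j : Fin (m + 2)) : DifferentiableAt ℝ (fun y => (g y)⁻¹ i j) x :=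
  differentiableAt_inv_entry (dg hUo hg hx) (gdet_ne hUo hg hx) i j

omit hUo hx in
lemma Gi_mul_g {y : Fin (m + 2) → ℝ} (hy : y ∈ U) (i j : Fin (m + 2)) :
    ∑ k, (g y)⁻¹ i k * g y k j = if i = j then 1 else 0 := by
  have h := Matrix.nonsing_inv_mul (g y) (hg.2.2 y hy)
  have h2 := congrFun (congrFun h i) j
  rwa [Matrix.mul_apply, Matrix.one_apply] at h2

omit hUo hx in
lemma g_mul_Gi {y : Fin (m + 2) → ℝ} (hy : y ∈ U) (i j : Fin (m + 2)) :
    ∑ k, g y i k * (g y)⁻¹ k j = if i = j then 1 else 0 := by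
  have h := Matrix.mul_nonsing_inv (g y) (hg.2.2 y hy)
  have h2 := congrFun (congrFun h i) j
  rwa [Matrix.mul_apply, Matrix.one_apply] at h2

omit hUo hx in
lemma Gi_symm {y : Fin (m + 2) → ℝ} (hy : y ∈ U) (i j : Fin (m + 2)) :
    (g y)⁻¹ i j = (g y)⁻¹ j i := by
  have ht : Matrix.transpose (g y) = g y := Matrix.ext fun i j => by
    rw [Matrix.transpose_apply]; exact hg.2.1 y hy j i
  have h := Matrix.transpose_nonsing_inv (g y)
  rw [ht] at h
  have h2 := congrFun (congrFun h j) i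
  rwa [Matrix.transpose_apply] at h2

lemma pd_g_symm (a i j : Fin (m + 2)) :
    pd a (fun y => g y i j) x = pd a (fun y => g y j i) x :=
  pd_congr (Filter.eventuallyEq_of_mem (hUo.mem_nhds hx) fun y hy => hg.2.1 y hy i j) a

lemma pd_Gi (a i j : Fin (m + 2)) :
    pd a (fun y => (g y)⁻¹ i j) x
      = -∑ k, ∑ l, (g x)⁻¹ i k * pd a (fun y => g y k l) x * (g x)⁻¹ l j := by
  have expand : ∀ j' : Fin (m + 2),
      ∑ k, ((g x)⁻¹ i k * pd a (fun y => g y k j') x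
        + g x k j' * pd a (fun y => (g y)⁻¹ i k) x) = 0 := by
    intro j'
    have h1 : pd a (fun y => ∑ k, (g y)⁻¹ i k * g y k j') x = 0 := by
      rw [pd_congr (Filter.eventuallyEq_of_mem (hUo.mem_nhds hx)
        fun y hy => Gi_mul_g hg hy i j') a]
      exact pd_const a _ x
    rw [pd_sum (fun k _ => (dGi hUo hg hx i k).fun_mul (dg hUo hg hx k j')) a] at h1
    rw [← h1]
    exact Finset.sum_congr rfl fun k _ =>
      (pd_mul (dGi hUo hg hx i k) (dg hUo hg hx k j') a).symm
  have key : ∀ j' : Fin (m + 2),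
      ∑ k, g x k j' * pd a (fun y => (g y)⁻¹ i k) x
        = -∑ k, (g x)⁻¹ i k * pd a (fun y => g y k j') x := by
    intro j'
    have := expand j'
    rw [Finset.sum_add_distrib] at this
    linarith
  calc pd a (fun y => (g y)⁻¹ i j) x
      = ∑ l, pd a (fun y => (g y)⁻¹ i l) x * (if l = j then (1:ℝ) else 0) := by
        rw [sum_delta_r]
    _ = ∑ l, pd a (fun y => (g y)⁻¹ i l) x * (∑ j', g x l j' * (g x)⁻¹ j' j) := by
        refine Finset.sum_congr rfl fun l _ => ?_
        rw [g_mul_Gi hg hx l j]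
    _ = ∑ j', (∑ l, g x l j' * pd a (fun y => (g y)⁻¹ i l) x) * (g x)⁻¹ j' j := by
        simp_rw [Finset.mul_sum, Finset.sum_mul]
        rw [Finset.sum_comm]
        exact Finset.sum_congr rfl fun j' _ => Finset.sum_congr rfl fun l _ => by ring
    _ = ∑ j', (-∑ k, (g x)⁻¹ i k * pd a (fun y => g y k j') x) * (g x)⁻¹ j' j := by
        exact Finset.sum_congr rfl fun j' _ => by rw [key j']
    _ = ∑ j', ∑ k, -((g x)⁻¹ i k * pd a (fun y => g y k j') x * (g x)⁻¹ j' j) := by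
        refine Finset.sum_congr rfl fun j' _ => ?_
        rw [neg_mul, Finset.sum_mul, ← Finset.sum_neg_distrib]
    _ = ∑ k, ∑ l, -((g x)⁻¹ i k * pd a (fun y => g y k l) x * (g x)⁻¹ l j) :=
        Finset.sum_comm
    _ = -∑ k, ∑ l, (g x)⁻¹ i k * pd a (fun y => g y k l) x * (g x)⁻¹ l j := by
        rw [← Finset.sum_neg_distrib]
        exact Finset.sum_congr rfl fun k _ => Finset.sum_neg_distrib _

lemma christoffel_symm (l a b : Fin (m + 2)) :
    christoffel g l a b x = christoffel g l b a x := by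
  unfold christoffel
  congr 1
  refine Finset.sum_congr rfl fun ρ _ => ?_
  rw [pd_g_symm hUo hg hx ρ a b]
  ring

lemma Gam_g (a b c : Fin (m + 2)) :
    ∑ l, christoffel g l a b x * g x l c
      = (1/2) * (pd a (fun y => g y c b) x + pd b (fun y => g y c a) x
          - pd c (fun y => g y a b) x) := by
  unfold christoffel
  have step : ∀ ρ : Fin (m + 2), ∑ l, (g x)⁻¹ l ρ * g x l c = if ρ = c then (1:ℝ) else 0 := by
    intro ρ
    have : ∑ l, (g x)⁻¹ ρ l * g x l c = if ρ = c then (1:ℝ) else 0 := Gi_mul_g hg hx ρ c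
    rw [← this]
    exact Finset.sum_congr rfl fun l _ => by rw [Gi_symm hg hx l ρ]
  calc ∑ l, ((1/2) * ∑ ρ, (g x)⁻¹ l ρ *
        (pd a (fun y => g y ρ b) x + pd b (fun y => g y ρ a) x - pd ρ (fun y => g y a b) x)) * g x l c
      = ∑ l, ∑ ρ, (1/2) * ((g x)⁻¹ l ρ *
        (pd a (fun y => g y ρ b) x + pd b (fun y => g y ρ a) x - pd ρ (fun y => g y a b) x)) * g x l c := by
        refine Finset.sum_congr rfl fun l _ => ?_
        rw [Finset.mul_sum, Finset.sum_mul]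
    _ = ∑ ρ, ∑ l, (1/2) * ((g x)⁻¹ l ρ *
        (pd a (fun y => g y ρ b) x + pd b (fun y => g y ρ a) x - pd ρ (fun y => g y a b) x)) * g x l c :=
        Finset.sum_comm
    _ = ∑ ρ, (∑ l, (g x)⁻¹ l ρ * g x l c) * ((1/2) *
        (pd a (fun y => g y ρ b) x + pd b (fun y => g y ρ a) x - pd ρ (fun y => g y a b) x)) := by
        refine Finset.sum_congr rfl fun ρ _ => ?_
        rw [Finset.sum_mul]
        exact Finset.sum_congr rfl fun l _ => by ring
    _ = ∑ ρ, (if ρ = c then (1:ℝ) else 0) * ((1/2) *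
        (pd a (fun y => g y ρ b) x + pd b (fun y => g y ρ a) x - pd ρ (fun y => g y a b) x)) :=
        Finset.sum_congr rfl fun ρ _ => by rw [step ρ]
    _ = (1/2) * (pd a (fun y => g y c b) x + pd b (fun y => g y c a) x
          - pd c (fun y => g y a b) x) := by rw [sum_delta]

lemma pdGi_Gam (a b c : Fin (m + 2)) :
    pd a (fun y => (g y)⁻¹ b c) x
      = -(∑ l, christoffel g b a l x * (g x)⁻¹ l c)
        - ∑ l, christoffel g c a l x * (g x)⁻¹ b l := by
  have hexp : ∀ p q : Fin (m + 2), ∑ l, christoffel g p a l x * (g x)⁻¹ l q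
      = (1/2) * (∑ k, ∑ l, (g x)⁻¹ p k * pd a (fun y => g y k l) x * (g x)⁻¹ l q)
      + (1/2) * (∑ k, ∑ l, (g x)⁻¹ p k * pd l (fun y => g y k a) x * (g x)⁻¹ l q)
      - (1/2) * (∑ k, ∑ l, (g x)⁻¹ p k * pd k (fun y => g y a l) x * (g x)⁻¹ l q) := by
    intro p q
    unfold christoffel
    calc ∑ l, ((1/2) * ∑ k, (g x)⁻¹ p k *
          (pd a (fun y => g y k l) x + pd l (fun y => g y k a) x - pd k (fun y => g y a l) x)) * (g x)⁻¹ l q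
        = ∑ l, ∑ k, (1/2) * ((g x)⁻¹ p k *
          (pd a (fun y => g y k l) x + pd l (fun y => g y k a) x - pd k (fun y => g y a l) x)) * (g x)⁻¹ l q := by
          refine Finset.sum_congr rfl fun l _ => ?_
          rw [Finset.mul_sum, Finset.sum_mul]
      _ = ∑ k, ∑ l, (1/2) * ((g x)⁻¹ p k *
          (pd a (fun y => g y k l) x + pd l (fun y => g y k a) x - pd k (fun y => g y a l) x)) * (g x)⁻¹ l q :=
          Finset.sum_comm
      _ = ∑ k, ∑ l, ((1/2) * ((g x)⁻¹ p k * pd a (fun y => g y k l) x * (g x)⁻¹ l q)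
          + (1/2) * ((g x)⁻¹ p k * pd l (fun y => g y k a) x * (g x)⁻¹ l q)
          - (1/2) * ((g x)⁻¹ p k * pd k (fun y => g y a l) x * (g x)⁻¹ l q)) :=
          Finset.sum_congr rfl fun k _ => Finset.sum_congr rfl fun l _ => by ring
      _ = (1/2) * (∑ k, ∑ l, (g x)⁻¹ p k * pd a (fun y => g y k l) x * (g x)⁻¹ l q)
          + (1/2) * (∑ k, ∑ l, (g x)⁻¹ p k * pd l (fun y => g y k a) x * (g x)⁻¹ l q)
          - (1/2) * (∑ k, ∑ l, (g x)⁻¹ p k * pd k (fun y => g y a l) x * (g x)⁻¹ l q) := by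
          simp only [Finset.sum_add_distrib, Finset.sum_sub_distrib, Finset.mul_sum]
  have flip : ∑ l, christoffel g c a l x * (g x)⁻¹ b l
      = ∑ l, christoffel g c a l x * (g x)⁻¹ l b :=
    Finset.sum_congr rfl fun l _ => by rw [Gi_symm hg hx b l]
  rw [flip]
  rw [pd_Gi hUo hg hx, hexp b c, hexp c b]
  -- identities
  have I1 : ∑ k, ∑ l, (g x)⁻¹ c k * pd a (fun y => g y k l) x * (g x)⁻¹ l b
      = ∑ k, ∑ l, (g x)⁻¹ b k * pd a (fun y => g y k l) x * (g x)⁻¹ l c := by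
    rw [Finset.sum_comm]
    refine Finset.sum_congr rfl fun k _ => Finset.sum_congr rfl fun l _ => ?_
    rw [Gi_symm hg hx c l, pd_g_symm hUo hg hx a l k, Gi_symm hg hx k b]
    ring
  have I2 : ∑ k, ∑ l, (g x)⁻¹ c k * pd k (fun y => g y a l) x * (g x)⁻¹ l b
      = ∑ k, ∑ l, (g x)⁻¹ b k * pd l (fun y => g y k a) x * (g x)⁻¹ l c := by
    rw [Finset.sum_comm]
    refine Finset.sum_congr rfl fun k _ => Finset.sum_congr rfl fun l _ => ?_
    rw [Gi_symm hg hx c l, pd_g_symm hUo hg hx l a k, Gi_symm hg hx k b]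
    ring
  have I3 : ∑ k, ∑ l, (g x)⁻¹ c k * pd l (fun y => g y k a) x * (g x)⁻¹ l b
      = ∑ k, ∑ l, (g x)⁻¹ b k * pd k (fun y => g y a l) x * (g x)⁻¹ l c := by
    rw [Finset.sum_comm]
    refine Finset.sum_congr rfl fun k _ => Finset.sum_congr rfl fun l _ => ?_
    rw [Gi_symm hg hx c l, pd_g_symm hUo hg hx k a l, Gi_symm hg hx k b]
    ring
  rw [I1, I2, I3]
  ring

end Layer2
section Layer3

variable {m : ℕ} {U : Set (Fin (m + 2) → ℝ)}
  {g : (Fin (m + 2) → ℝ) → Matrix (Fin (m + 2)) (Fin (m + 2)) ℝ}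
  (hg : IsMetricOn U g) {ε : ℝ} (hfol : AdaptedFoliation U g ε)

include hg hfol

lemma eps_mul : ε * ε = 1 := by rcases hfol.1 with h | h <;> rw [h] <;> norm_num

lemma eps_ne : ε ≠ 0 := by rcases hfol.1 with h | h <;> rw [h] <;> norm_num

lemma nCov_def (y : Fin (m + 2) → ℝ) (a : Fin (m + 2)) :
    nCov g y a = if a = 0 then lapse g y else 0 := rfl

lemma sum_weight_nCov (y : Fin (m + 2) → ℝ) (f : Fin (m + 2) → ℝ) :
    ∑ a, f a * nCov g y a = f 0 * lapse g y := by
  simp [nCov, mul_ite]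

lemma sum_nCov_weight (y : Fin (m + 2) → ℝ) (f : Fin (m + 2) → ℝ) :
    ∑ a, nCov g y a * f a = lapse g y * f 0 := by
  simp [nCov, ite_mul]

lemma Gi00_abs {y : Fin (m + 2) → ℝ} (hy : y ∈ U) :
    |(g y)⁻¹ 0 0| = ε * (g y)⁻¹ 0 0 := by
  have h := hfol.2 y hy
  rcases hfol.1 with he | he <;> rw [he] at h ⊢
  · rw [one_mul] at h ⊢; exact abs_of_pos h
  · have : (g y)⁻¹ 0 0 < 0 := by nlinarith
    rw [abs_of_neg this]; ring

lemma lapse_eqU {y : Fin (m + 2) → ℝ} (hy : y ∈ U) :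
    lapse g y = (Real.sqrt (ε * (g y)⁻¹ 0 0))⁻¹ := by
  rw [lapse, Gi00_abs hg hfol hy, one_div]

lemma lapse_pos {y : Fin (m + 2) → ℝ} (hy : y ∈ U) : 0 < lapse g y := by
  rw [lapse_eqU hg hfol hy]
  exact inv_pos.mpr (Real.sqrt_pos.mpr (hfol.2 y hy))

lemma lapse_sq {y : Fin (m + 2) → ℝ} (hy : y ∈ U) :
    lapse g y * lapse g y * (ε * (g y)⁻¹ 0 0) = 1 := by
  rw [lapse_eqU hg hfol hy]
  have h := hfol.2 y hy
  have hs : Real.sqrt (ε * (g y)⁻¹ 0 0) * Real.sqrt (ε * (g y)⁻¹ 0 0) = ε * (g y)⁻¹ 0 0 :=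
    Real.mul_self_sqrt (le_of_lt h)
  rw [← mul_inv, hs]
  exact inv_mul_cancel₀ (ne_of_gt h)

lemma lapse_Gi00 {y : Fin (m + 2) → ℝ} (hy : y ∈ U) :
    lapse g y * lapse g y * (g y)⁻¹ 0 0 = ε := by
  have h := lapse_sq hg hfol hy
  have he := eps_mul hg hfol
  linear_combination ε * h - lapse g y * lapse g y * (g y)⁻¹ 0 0 * he

lemma nCon_lapse {y : Fin (m + 2) → ℝ} (hy : y ∈ U) :
    nCon g y 0 * lapse g y = ε := by
  have h := lapse_Gi00 hg hfol hy
  rw [nCon]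
  linear_combination h

lemma nn_eq {y : Fin (m + 2) → ℝ} (hy : y ∈ U) :
    ∑ a, nCon g y a * nCov g y a = ε := by
  rw [sum_weight_nCov hg hfol]
  exact nCon_lapse hg hfol hy

lemma gn {y : Fin (m + 2) → ℝ} (hy : y ∈ U) (a : Fin (m + 2)) :
    ∑ b, g y a b * nCon g y b = nCov g y a := by
  have h := g_mul_Gi hg hy a 0
  calc ∑ b, g y a b * nCon g y b = lapse g y * ∑ b, g y a b * (g y)⁻¹ b 0 := by
        rw [Finset.mul_sum]; exact Finset.sum_congr rfl fun b _ => by rw [nCon]; ring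
    _ = lapse g y * (if a = 0 then 1 else 0) := by rw [h]
    _ = nCov g y a := by rw [nCov_def hg hfol]; by_cases ha : a = 0 <;> simp [ha]

lemma Gin {y : Fin (m + 2) → ℝ} (hy : y ∈ U) (b : Fin (m + 2)) :
    ∑ c, (g y)⁻¹ b c * nCov g y c = nCon g y b := by
  rw [sum_weight_nCov hg hfol y (fun c => (g y)⁻¹ b c), nCon]; ring

lemma projnCov {y : Fin (m + 2) → ℝ} (hy : y ∈ U) (a : Fin (m + 2)) :
    ∑ l, proj g ε y l a * nCov g y l = 0 := by
  have h2 := nn_eq hg hfol hy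
  have he := eps_mul hg hfol
  calc ∑ l, proj g ε y l a * nCov g y l
      = ∑ l, ((if l = a then (1:ℝ) else 0) * nCov g y l
          - ε * nCov g y a * (nCon g y l * nCov g y l)) := by
        refine Finset.sum_congr rfl fun l _ => ?_
        rw [proj]; ring
    _ = nCov g y a - ε * nCov g y a * ε := by
        rw [Finset.sum_sub_distrib, sum_delta, ← Finset.mul_sum, h2]
    _ = 0 := by linear_combination (-(nCov g y a)) * he

lemma projnCon {y : Fin (m + 2) → ℝ} (hy : y ∈ U) (l : Fin (m + 2)) :
    ∑ a, proj g ε y l a * nCon g y a = 0 := by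
  have h2 := nn_eq hg hfol hy
  have he := eps_mul hg hfol
  calc ∑ a, proj g ε y l a * nCon g y a
      = ∑ a, ((if l = a then (1:ℝ) else 0) * nCon g y a
          - ε * nCon g y l * (nCon g y a * nCov g y a)) := by
        refine Finset.sum_congr rfl fun a _ => ?_
        rw [proj]; ring
    _ = nCon g y l - ε * nCon g y l * ε := by
        rw [Finset.sum_sub_distrib, sum_delta', ← Finset.mul_sum, h2]
    _ = 0 := by linear_combination (-(nCon g y l)) * he

lemma proj_zero {y : Fin (m + 2) → ℝ} (hy : y ∈ U) (a : Fin (m + 2)) :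
    proj g ε y 0 a = 0 := by
  have h := projnCov hg hfol hy a
  rw [sum_weight_nCov hg hfol y (fun l => proj g ε y l a)] at h
  have hl := lapse_pos hg hfol hy
  rcases mul_eq_zero.mp h with h' | h'
  · exact h'
  · exact absurd h' (ne_of_gt hl)

lemma proj_g {y : Fin (m + 2) → ℝ} (hy : y ∈ U) (a p : Fin (m + 2)) :
    ∑ l, proj g ε y l a * g y l p = hInd g ε y a p := by
  have hsg : ∀ l, g y l p = g y p l := fun l => hg.2.1 y hy l p
  calc ∑ l, proj g ε y l a * g y l p
      = ∑ l, ((if l = a then (1:ℝ) else 0) * g y l p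
          - ε * nCov g y a * (g y p l * nCon g y l)) := by
        refine Finset.sum_congr rfl fun l _ => ?_
        rw [proj, hsg l]; ring
    _ = g y a p - ε * nCov g y a * nCov g y p := by
        rw [Finset.sum_sub_distrib, sum_delta, ← Finset.mul_sum, gn hg hfol hy p]
    _ = hInd g ε y a p := by rw [hInd]

lemma proj_hInd {y : Fin (m + 2) → ℝ} (hy : y ∈ U) (a b : Fin (m + 2)) :
    ∑ p, proj g ε y p b * hInd g ε y a p = hInd g ε y a b := by
  have h2 := nn_eq hg hfol hy
  have he := eps_mul hg hfol
  have hgn : ∑ p, nCon g y p * g y a p = nCov g y a := by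
    rw [← gn hg hfol hy a]
    exact Finset.sum_congr rfl fun p _ => by ring
  calc ∑ p, proj g ε y p b * hInd g ε y a p
      = ∑ p, ((if p = b then (1:ℝ) else 0) * hInd g ε y a p
          - ε * nCov g y b * (nCon g y p * g y a p)
          + (ε * ε) * (nCov g y b * nCov g y a) * (nCon g y p * nCov g y p)) := by
        refine Finset.sum_congr rfl fun p _ => ?_
        rw [proj, hInd]; ring
    _ = hInd g ε y a b - ε * nCov g y b * nCov g y a
          + (ε * ε) * (nCov g y b * nCov g y a) * ε := by
        rw [Finset.sum_add_distrib, Finset.sum_sub_distrib, sum_delta,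
          ← Finset.mul_sum, ← Finset.mul_sum, hgn, h2]
    _ = hInd g ε y a b := by
        linear_combination (ε * (nCov g y b * nCov g y a)) * he

end Layer3
section Layer4

lemma sum3_swap13 {ι : Type*} [Fintype ι] (f : ι → ι → ι → ℝ) :
    ∑ a, ∑ b, ∑ c, f a b c = ∑ c, ∑ b, ∑ a, f a b c := by
  calc ∑ a, ∑ b, ∑ c, f a b c
      = ∑ a, ∑ c, ∑ b, f a b c := Finset.sum_congr rfl fun a _ => Finset.sum_comm
    _ = ∑ c, ∑ a, ∑ b, f a b c := Finset.sum_comm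
    _ = ∑ c, ∑ b, ∑ a, f a b c := Finset.sum_congr rfl fun c _ => Finset.sum_comm

variable {m : ℕ} {U : Set (Fin (m + 2) → ℝ)} (hUo : IsOpen U)
  {g : (Fin (m + 2) → ℝ) → Matrix (Fin (m + 2)) (Fin (m + 2)) ℝ}
  (hg : IsMetricOn U g) {ε : ℝ} (hfol : AdaptedFoliation U g ε)
  {x : Fin (m + 2) → ℝ} (hx : x ∈ U)

include hUo hg hfol hx

lemma dlapse : DifferentiableAt ℝ (fun y => lapse g y) x := by
  have hev : (fun y => (Real.sqrt (ε * (g y)⁻¹ 0 0))⁻¹) =ᶠ[nhds x] (fun y => lapse g y) :=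
    Filter.eventuallyEq_of_mem (hUo.mem_nhds hx) fun y hy => (lapse_eqU hg hfol hy).symm
  have h1 : (0:ℝ) < ε * (g x)⁻¹ 0 0 := hfol.2 x hx
  have hd : DifferentiableAt ℝ (fun y => (Real.sqrt (ε * (g y)⁻¹ 0 0))⁻¹) x := by
    refine DifferentiableAt.inv ?_ (ne_of_gt (Real.sqrt_pos.mpr h1))
    exact ((dGi hUo hg hx 0 0).const_mul ε).sqrt (ne_of_gt h1)
  exact hd.congr_of_eventuallyEq hev.symm

lemma dnCov (b : Fin (m + 2)) : DifferentiableAt ℝ (fun y => nCov g y b) x := by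
  have : (fun y => nCov g y b) = fun y => if b = 0 then lapse g y else 0 := rfl
  rw [this]
  by_cases hb : b = 0
  · simpa [hb] using dlapse hUo hg hfol hx
  · simp [hb]

lemma dnCon (b : Fin (m + 2)) : DifferentiableAt ℝ (fun y => nCon g y b) x :=
  (dlapse hUo hg hfol hx).mul (dGi hUo hg hx b 0)

lemma pd_nCov (a b : Fin (m + 2)) :
    pd a (fun y => nCov g y b) x
      = (if b = 0 then (1:ℝ) else 0) * pd a (fun y => lapse g y) x := by
  have : (fun y => nCov g y b) = fun y => if b = 0 then lapse g y else 0 := rfl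
  rw [this]
  by_cases hb : b = 0
  · simp [hb]
  · simp [hb, pd_const]

lemma GLc {β γ : (Fin (m + 2) → ℝ) → Fin (m + 2) → ℝ}
    (dβ : ∀ b, DifferentiableAt ℝ (fun y => β y b) x)
    (dγ : ∀ b, DifferentiableAt ℝ (fun y => γ y b) x) (a : Fin (m + 2)) :
    pd a (fun y => ∑ b, ∑ c, (g y)⁻¹ b c * β y b * γ y c) x
      = ∑ b, ∑ c, (g x)⁻¹ b c *
          (covd1 g β a b x * γ x c + β x b * covd1 g γ a c x) := by
  have hdsum : ∀ b c : Fin (m + 2),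
      DifferentiableAt ℝ (fun y => (g y)⁻¹ b c * β y b * γ y c) x :=
    fun b c => ((dGi hUo hg hx b c).fun_mul (dβ b)).fun_mul (dγ c)
  have h1 : pd a (fun y => ∑ b, ∑ c, (g y)⁻¹ b c * β y b * γ y c) x
      = ∑ b, ∑ c, pd a (fun y => (g y)⁻¹ b c * β y b * γ y c) x := by
    rw [pd_sum (fun b _ => DifferentiableAt.fun_sum fun c _ => hdsum b c) a]
    exact Finset.sum_congr rfl fun b _ => pd_sum (fun c _ => hdsum b c) a
  have h2 : ∀ b c : Fin (m + 2), pd a (fun y => (g y)⁻¹ b c * β y b * γ y c) x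
      = ((g x)⁻¹ b c * β x b * pd a (fun y => γ y c) x
          + γ x c * ((g x)⁻¹ b c * pd a (fun y => β y b) x))
        + γ x c * β x b * pd a (fun y => (g y)⁻¹ b c) x := by
    intro b c
    rw [pd_mul ((dGi hUo hg hx b c).fun_mul (dβ b)) (dγ c) a,
      pd_mul (dGi hUo hg hx b c) (dβ b) a]
    ring
  have hEQ : ∀ b c : Fin (m + 2), (g x)⁻¹ b c *
        (covd1 g β a b x * γ x c + β x b * covd1 g γ a c x)
      = ((g x)⁻¹ b c * β x b * pd a (fun y => γ y c) x
          + γ x c * ((g x)⁻¹ b c * pd a (fun y => β y b) x))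
        + (-((g x)⁻¹ b c * (∑ l, christoffel g l a b x * β x l) * γ x c)
           - (g x)⁻¹ b c * β x b * (∑ l, christoffel g l a c x * γ x l)) := by
    intro b c
    rw [covd1, covd1]
    ring
  have key : ∑ b, ∑ c, γ x c * β x b * pd a (fun y => (g y)⁻¹ b c) x
      = ∑ b, ∑ c, (-((g x)⁻¹ b c * (∑ l, christoffel g l a b x * β x l) * γ x c)
           - (g x)⁻¹ b c * β x b * (∑ l, christoffel g l a c x * γ x l)) := by
    have hz : ∀ b c : Fin (m + 2), γ x c * β x b * pd a (fun y => (g y)⁻¹ b c) x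
        = (-∑ l, β x b * γ x c * christoffel g b a l x * (g x)⁻¹ l c)
          + (-∑ l, β x b * γ x c * christoffel g c a l x * (g x)⁻¹ b l) := by
      intro b c
      rw [pdGi_Gam hUo hg hx a b c]
      have e1 : γ x c * β x b * (∑ l, christoffel g b a l x * (g x)⁻¹ l c)
          = ∑ l, β x b * γ x c * christoffel g b a l x * (g x)⁻¹ l c := by
        rw [Finset.mul_sum]; exact Finset.sum_congr rfl fun l _ => by ring
      have e2 : γ x c * β x b * (∑ l, christoffel g c a l x * (g x)⁻¹ b l)
          = ∑ l, β x b * γ x c * christoffel g c a l x * (g x)⁻¹ b l := by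
        rw [Finset.mul_sum]; exact Finset.sum_congr rfl fun l _ => by ring
      linear_combination (-1 : ℝ) * e1 - e2
    have hw : ∀ b c : Fin (m + 2),
        -((g x)⁻¹ b c * (∑ l, christoffel g l a b x * β x l) * γ x c)
           - (g x)⁻¹ b c * β x b * (∑ l, christoffel g l a c x * γ x l)
        = (-∑ l, (g x)⁻¹ b c * christoffel g l a b x * β x l * γ x c)
          + (-∑ l, (g x)⁻¹ b c * christoffel g l a c x * β x b * γ x l) := by
      intro b c
      have e1 : (g x)⁻¹ b c * (∑ l, christoffel g l a b x * β x l) * γ x c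
          = ∑ l, (g x)⁻¹ b c * christoffel g l a b x * β x l * γ x c := by
        rw [Finset.mul_sum, Finset.sum_mul]
        exact Finset.sum_congr rfl fun l _ => by ring
      have e2 : (g x)⁻¹ b c * β x b * (∑ l, christoffel g l a c x * γ x l)
          = ∑ l, (g x)⁻¹ b c * christoffel g l a c x * β x b * γ x l := by
        rw [Finset.mul_sum]
        exact Finset.sum_congr rfl fun l _ => by ring
      linear_combination (-1 : ℝ) * e1 - e2
    have IA : ∑ b, ∑ c, ∑ l, (g x)⁻¹ b c * christoffel g l a b x * β x l * γ x c
        = ∑ b, ∑ c, ∑ l, β x b * γ x c * christoffel g b a l x * (g x)⁻¹ l c := by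
      rw [sum3_swap13 (fun b c l => (g x)⁻¹ b c * christoffel g l a b x * β x l * γ x c)]
      exact Finset.sum_congr rfl fun b _ => Finset.sum_congr rfl fun c _ =>
        Finset.sum_congr rfl fun l _ => by ring
    have IB : ∑ b, ∑ c, ∑ l, (g x)⁻¹ b c * christoffel g l a c x * β x b * γ x l
        = ∑ b, ∑ c, ∑ l, β x b * γ x c * christoffel g c a l x * (g x)⁻¹ b l := by
      refine Finset.sum_congr rfl fun b _ => ?_
      rw [Finset.sum_comm]
      exact Finset.sum_congr rfl fun c _ => Finset.sum_congr rfl fun l _ => by ring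
    calc ∑ b, ∑ c, γ x c * β x b * pd a (fun y => (g y)⁻¹ b c) x
        = ∑ b, ∑ c, ((-∑ l, β x b * γ x c * christoffel g b a l x * (g x)⁻¹ l c)
            + (-∑ l, β x b * γ x c * christoffel g c a l x * (g x)⁻¹ b l)) :=
          Finset.sum_congr rfl fun b _ => Finset.sum_congr rfl fun c _ => hz b c
      _ = (-∑ b, ∑ c, ∑ l, β x b * γ x c * christoffel g b a l x * (g x)⁻¹ l c)
            + (-∑ b, ∑ c, ∑ l, β x b * γ x c * christoffel g c a l x * (g x)⁻¹ b l) := by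
          simp only [Finset.sum_add_distrib, Finset.sum_neg_distrib]
      _ = (-∑ b, ∑ c, ∑ l, (g x)⁻¹ b c * christoffel g l a b x * β x l * γ x c)
            + (-∑ b, ∑ c, ∑ l, (g x)⁻¹ b c * christoffel g l a c x * β x b * γ x l) := by
          rw [IA, IB]
      _ = ∑ b, ∑ c, ((-∑ l, (g x)⁻¹ b c * christoffel g l a b x * β x l * γ x c)
            + (-∑ l, (g x)⁻¹ b c * christoffel g l a c x * β x b * γ x l)) := by
          simp only [Finset.sum_add_distrib, Finset.sum_neg_distrib]
      _ = ∑ b, ∑ c, (-((g x)⁻¹ b c * (∑ l, christoffel g l a b x * β x l) * γ x c)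
           - (g x)⁻¹ b c * β x b * (∑ l, christoffel g l a c x * γ x l)) :=
          Finset.sum_congr rfl fun b _ => Finset.sum_congr rfl fun c _ => (hw b c).symm
  calc pd a (fun y => ∑ b, ∑ c, (g y)⁻¹ b c * β y b * γ y c) x
      = ∑ b, ∑ c, (((g x)⁻¹ b c * β x b * pd a (fun y => γ y c) x
          + γ x c * ((g x)⁻¹ b c * pd a (fun y => β y b) x))
        + γ x c * β x b * pd a (fun y => (g y)⁻¹ b c) x) := by
        rw [h1]
        exact Finset.sum_congr rfl fun b _ => Finset.sum_congr rfl fun c _ => h2 b c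
    _ = (∑ b, ∑ c, ((g x)⁻¹ b c * β x b * pd a (fun y => γ y c) x
          + γ x c * ((g x)⁻¹ b c * pd a (fun y => β y b) x)))
        + ∑ b, ∑ c, γ x c * β x b * pd a (fun y => (g y)⁻¹ b c) x := by
        simp only [Finset.sum_add_distrib]
    _ = (∑ b, ∑ c, ((g x)⁻¹ b c * β x b * pd a (fun y => γ y c) x
          + γ x c * ((g x)⁻¹ b c * pd a (fun y => β y b) x)))
        + ∑ b, ∑ c, (-((g x)⁻¹ b c * (∑ l, christoffel g l a b x * β x l) * γ x c)
           - (g x)⁻¹ b c * β x b * (∑ l, christoffel g l a c x * γ x l)) := by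
        rw [key]
    _ = ∑ b, ∑ c, (((g x)⁻¹ b c * β x b * pd a (fun y => γ y c) x
          + γ x c * ((g x)⁻¹ b c * pd a (fun y => β y b) x))
        + (-((g x)⁻¹ b c * (∑ l, christoffel g l a b x * β x l) * γ x c)
           - (g x)⁻¹ b c * β x b * (∑ l, christoffel g l a c x * γ x l))) := by
        simp only [Finset.sum_add_distrib]
    _ = ∑ b, ∑ c, (g x)⁻¹ b c *
          (covd1 g β a b x * γ x c + β x b * covd1 g γ a c x) :=
        Finset.sum_congr rfl fun b _ => Finset.sum_congr rfl fun c _ => (hEQ b c).symm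

end Layer4
section Layer5

variable {m : ℕ} {U : Set (Fin (m + 2) → ℝ)} (hUo : IsOpen U)
  {g : (Fin (m + 2) → ℝ) → Matrix (Fin (m + 2)) (Fin (m + 2)) ℝ}
  (hg : IsMetricOn U g) {ε : ℝ} (hfol : AdaptedFoliation U g ε)
  {x : Fin (m + 2) → ℝ} (hx : x ∈ U)
  {K : (Fin (m + 2) → ℝ) → Fin (m + 2) → ℝ}
  (hKsmooth : ∀ b, ContDiffOn ℝ (⊤ : ℕ∞) (fun x => K x b) U)
  {ζ : (Fin (m + 2) → ℝ) → ℝ} (hζ : ∀ x, ζ x = ε * ∑ a, nCon g x a * K x a)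
  {𝒦 : (Fin (m + 2) → ℝ) → Fin (m + 2) → ℝ}
  (h𝒦 : ∀ x a, 𝒦 x a = ∑ b, proj g ε x b a * K x b)

include hUo hg hfol hx hKsmooth hζ h𝒦

omit hUo hx hζ h𝒦 hKsmooth in
lemma eps_zeta (hζ : ∀ x, ζ x = ε * ∑ a, nCon g x a * K x a) (y : Fin (m + 2) → ℝ) :
    ∑ a, nCon g y a * K y a = ε * ζ y := by
  have he := eps_mul hg hfol
  rw [hζ y]
  linear_combination (-(∑ a, nCon g y a * K y a)) * he

omit hUo hx hKsmooth in
lemma K_decomp {y : Fin (m + 2) → ℝ} (hy : y ∈ U) (b : Fin (m + 2)) :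
    𝒦 y b = K y b - ζ y * nCov g y b := by
  have he := eps_mul hg hfol
  rw [h𝒦 y b]
  calc ∑ c, proj g ε y c b * K y c
      = ∑ c, ((if c = b then (1:ℝ) else 0) * K y c
          - ε * nCov g y b * (nCon g y c * K y c)) := by
        refine Finset.sum_congr rfl fun c _ => ?_
        rw [proj]; ring
    _ = K y b - ε * nCov g y b * ∑ c, nCon g y c * K y c := by
        rw [Finset.sum_sub_distrib, sum_delta, ← Finset.mul_sum]
    _ = K y b - ζ y * nCov g y b := by
        rw [eps_zeta hg hfol hζ y]
        linear_combination (-(ζ y * nCov g y b)) * he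

omit hUo hx hKsmooth in
lemma n𝒦U {y : Fin (m + 2) → ℝ} (hy : y ∈ U) :
    ∑ a, nCon g y a * 𝒦 y a = 0 := by
  have he := eps_mul hg hfol
  calc ∑ a, nCon g y a * 𝒦 y a
      = ∑ a, (nCon g y a * K y a - ζ y * (nCon g y a * nCov g y a)) := by
        refine Finset.sum_congr rfl fun a _ => ?_
        rw [K_decomp hg hfol hζ h𝒦 hy a]; ring
    _ = (∑ a, nCon g y a * K y a) - ζ y * ∑ a, nCon g y a * nCov g y a := by
        rw [Finset.sum_sub_distrib, ← Finset.mul_sum]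
    _ = 0 := by rw [eps_zeta hg hfol hζ y, nn_eq hg hfol hy]; ring

omit hUo hx hKsmooth in
lemma Gi0𝒦 {y : Fin (m + 2) → ℝ} (hy : y ∈ U) :
    ∑ c, (g y)⁻¹ 0 c * 𝒦 y c = 0 := by
  have h := n𝒦U hg hfol hζ h𝒦 hy
  have he : ∑ a, nCon g y a * 𝒦 y a = lapse g y * ∑ c, (g y)⁻¹ 0 c * 𝒦 y c := by
    rw [Finset.mul_sum]
    refine Finset.sum_congr rfl fun c _ => ?_
    rw [nCon, Gi_symm hg hy c 0]; ring
  rw [he] at h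
  rcases mul_eq_zero.mp h with h' | h'
  · exact absurd h' (ne_of_gt (lapse_pos hg hfol hy))
  · exact h'

omit hUo hx hKsmooth in
lemma GinCov𝒦U {y : Fin (m + 2) → ℝ} (hy : y ∈ U) :
    ∑ b, ∑ c, (g y)⁻¹ b c * nCov g y b * 𝒦 y c = 0 := by
  calc ∑ b, ∑ c, (g y)⁻¹ b c * nCov g y b * 𝒦 y c
      = ∑ c, ∑ b, (g y)⁻¹ b c * nCov g y b * 𝒦 y c := Finset.sum_comm
    _ = ∑ c, nCon g y c * 𝒦 y c := by
        refine Finset.sum_congr rfl fun c _ => ?_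
        rw [← Gin hg hfol hy c, Finset.sum_mul]
        refine Finset.sum_congr rfl fun b _ => ?_
        rw [Gi_symm hg hy b c]
    _ = 0 := n𝒦U hg hfol hζ h𝒦 hy

omit hUo hx hζ h𝒦 hKsmooth in
lemma GinCovnCovU {y : Fin (m + 2) → ℝ} (hy : y ∈ U) :
    ∑ b, ∑ c, (g y)⁻¹ b c * nCov g y b * nCov g y c = ε := by
  calc ∑ b, ∑ c, (g y)⁻¹ b c * nCov g y b * nCov g y c
      = ∑ c, ∑ b, (g y)⁻¹ b c * nCov g y b * nCov g y c := Finset.sum_comm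
    _ = ∑ c, nCon g y c * nCov g y c := by
        refine Finset.sum_congr rfl fun c _ => ?_
        rw [← Gin hg hfol hy c, Finset.sum_mul]
        refine Finset.sum_congr rfl fun b _ => ?_
        rw [Gi_symm hg hy b c]
    _ = ε := nn_eq hg hfol hy

omit hζ h𝒦 in
lemma dK (b : Fin (m + 2)) : DifferentiableAt ℝ (fun y => K y b) x :=
  ((hKsmooth b).contDiffAt (hUo.mem_nhds hx)).differentiableAt (by simp)

omit hζ in
lemma d𝒦 (b : Fin (m + 2)) : DifferentiableAt ℝ (fun y => 𝒦 y b) x := by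
  have : (fun y => 𝒦 y b) = fun y => ∑ c, proj g ε y c b * K y c := by
    funext y; exact h𝒦 y b
  rw [this]
  refine DifferentiableAt.fun_sum fun c _ => DifferentiableAt.fun_mul ?_ (dK hUo hg hfol hx hKsmooth c)
  refine DifferentiableAt.sub (differentiableAt_const _) ?_
  exact ((dnCon hUo hg hfol hx c).const_mul ε).mul (dnCov hUo hg hfol hx b)

omit h𝒦 in
lemma dζ : DifferentiableAt ℝ ζ x := by
  have : ζ = fun y => ε * ∑ a, nCon g y a * K y a := by funext y; exact hζ y
  rw [this]
  exact (DifferentiableAt.fun_sum fun c _ =>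
    (dnCon hUo hg hfol hx c).fun_mul (dK hUo hg hfol hx hKsmooth c)).const_mul ε

lemma covd_decomp (a b : Fin (m + 2)) :
    covd1 g 𝒦 a b x = covd1 g K a b x - pd a ζ x * nCov g x b
      - ζ x * covd1 g (fun y => nCov g y) a b x := by
  have hpd : pd a (fun y => 𝒦 y b) x
      = pd a (fun y => K y b) x - (ζ x * pd a (fun y => nCov g y b) x
          + nCov g x b * pd a ζ x) := by
    have hev : (fun y => 𝒦 y b) =ᶠ[nhds x] fun y => K y b - ζ y * nCov g y b :=
      Filter.eventuallyEq_of_mem (hUo.mem_nhds hx) fun y hy => K_decomp hg hfol hζ h𝒦 hy b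
    rw [pd_congr hev a,
      pd_sub (dK hUo hg hfol hx hKsmooth b)
        ((dζ hUo hg hfol hx hKsmooth hζ).fun_mul (dnCov hUo hg hfol hx b)) a,
      pd_mul (dζ hUo hg hfol hx hKsmooth hζ) (dnCov hUo hg hfol hx b) a]
  have hGam : ∑ l, christoffel g l a b x * 𝒦 x l
      = (∑ l, christoffel g l a b x * K x l)
        - ζ x * ∑ l, christoffel g l a b x * nCov g x l := by
    rw [Finset.mul_sum, ← Finset.sum_sub_distrib]
    refine Finset.sum_congr rfl fun l _ => ?_
    rw [K_decomp hg hfol hζ h𝒦 hx l]; ring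
  rw [covd1, covd1, covd1, hpd, hGam]
  ring

omit hKsmooth hζ h𝒦 in
lemma covd_n_antisym (a b : Fin (m + 2)) :
    covd1 g (fun y => nCov g y) a b x = covd1 g (fun y => nCov g y) b a x
      + (if b = 0 then (1:ℝ) else 0) * pd a (fun y => lapse g y) x
      - (if a = 0 then (1:ℝ) else 0) * pd b (fun y => lapse g y) x := by
  have hG : ∑ l, christoffel g l a b x * nCov g x l
      = ∑ l, christoffel g l b a x * nCov g x l :=
    Finset.sum_congr rfl fun l _ => by rw [christoffel_symm hUo hg hx l a b]
  rw [covd1, covd1, pd_nCov hUo hg hfol hx a b, pd_nCov hUo hg hfol hx b a, hG]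
  ring

omit hKsmooth hζ h𝒦 in
lemma GLnn (a : Fin (m + 2)) :
    ∑ b, nCon g x b * covd1 g (fun y => nCov g y) a b x = 0 := by
  have hGL := GLc hUo hg hfol hx (β := fun y => nCov g y) (γ := fun y => nCov g y)
    (dnCov hUo hg hfol hx) (dnCov hUo hg hfol hx) a
  have h0 : pd a (fun y => ∑ b, ∑ c, (g y)⁻¹ b c * nCov g y b * nCov g y c) x = 0 := by
    rw [pd_congr (Filter.eventuallyEq_of_mem (hUo.mem_nhds hx)
      fun y hy => GinCovnCovU hg hfol hy) a]
    exact pd_const a ε x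
  rw [h0] at hGL
  have hsplit : ∑ b, ∑ c, (g x)⁻¹ b c *
        (covd1 g (fun y => nCov g y) a b x * nCov g x c
          + nCov g x b * covd1 g (fun y => nCov g y) a c x)
      = 2 * ∑ b, nCon g x b * covd1 g (fun y => nCov g y) a b x := by
    have t1 : ∑ b, ∑ c, (g x)⁻¹ b c * (covd1 g (fun y => nCov g y) a b x * nCov g x c)
        = ∑ b, nCon g x b * covd1 g (fun y => nCov g y) a b x := by
      refine Finset.sum_congr rfl fun b _ => ?_
      rw [← Gin hg hfol hx b, Finset.sum_mul]
      refine Finset.sum_congr rfl fun c _ => by ring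
    have t2 : ∑ b, ∑ c, (g x)⁻¹ b c * (nCov g x b * covd1 g (fun y => nCov g y) a c x)
        = ∑ b, nCon g x b * covd1 g (fun y => nCov g y) a b x := by
      rw [Finset.sum_comm]
      refine Finset.sum_congr rfl fun c _ => ?_
      rw [← Gin hg hfol hx c, Finset.sum_mul]
      refine Finset.sum_congr rfl fun b _ => ?_
      rw [Gi_symm hg hx b c]; ring
    calc ∑ b, ∑ c, (g x)⁻¹ b c *
        (covd1 g (fun y => nCov g y) a b x * nCov g x c
          + nCov g x b * covd1 g (fun y => nCov g y) a c x)
        = (∑ b, ∑ c, (g x)⁻¹ b c * (covd1 g (fun y => nCov g y) a b x * nCov g x c))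
          + ∑ b, ∑ c, (g x)⁻¹ b c * (nCov g x b * covd1 g (fun y => nCov g y) a c x) := by
          simp only [mul_add, Finset.sum_add_distrib]
      _ = 2 * ∑ b, nCon g x b * covd1 g (fun y => nCov g y) a b x := by
          rw [t1, t2]; ring
  rw [hsplit] at hGL
  linarith

lemma GLn𝒦 (a : Fin (m + 2)) :
    ∑ b, nCon g x b * covd1 g 𝒦 a b x
      = -∑ b, (∑ c, (g x)⁻¹ b c * 𝒦 x c) * covd1 g (fun y => nCov g y) a b x := by
  have hGL := GLc hUo hg hfol hx (β := fun y => nCov g y) (γ := 𝒦)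
    (dnCov hUo hg hfol hx) (d𝒦 hUo hg hfol hx hKsmooth h𝒦) a
  have h0 : pd a (fun y => ∑ b, ∑ c, (g y)⁻¹ b c * nCov g y b * 𝒦 y c) x = 0 := by
    rw [pd_congr (Filter.eventuallyEq_of_mem (hUo.mem_nhds hx)
      fun y hy => GinCov𝒦U hg hfol hζ h𝒦 hy) a]
    exact pd_const a 0 x
  rw [h0] at hGL
  have t1 : ∑ b, ∑ c, (g x)⁻¹ b c * (covd1 g (fun y => nCov g y) a b x * 𝒦 x c)
      = ∑ b, (∑ c, (g x)⁻¹ b c * 𝒦 x c) * covd1 g (fun y => nCov g y) a b x := by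
    refine Finset.sum_congr rfl fun b _ => ?_
    rw [Finset.sum_mul]
    exact Finset.sum_congr rfl fun c _ => by ring
  have t2 : ∑ b, ∑ c, (g x)⁻¹ b c * (nCov g x b * covd1 g 𝒦 a c x)
      = ∑ b, nCon g x b * covd1 g 𝒦 a b x := by
    rw [Finset.sum_comm]
    refine Finset.sum_congr rfl fun c _ => ?_
    rw [← Gin hg hfol hx c, Finset.sum_mul]
    refine Finset.sum_congr rfl fun b _ => ?_
    rw [Gi_symm hg hx b c]; ring
  have hsplit : ∑ b, ∑ c, (g x)⁻¹ b c *
        (covd1 g (fun y => nCov g y) a b x * 𝒦 x c + nCov g x b * covd1 g 𝒦 a c x)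
      = (∑ b, (∑ c, (g x)⁻¹ b c * 𝒦 x c) * covd1 g (fun y => nCov g y) a b x)
        + ∑ b, nCon g x b * covd1 g 𝒦 a b x := by
    calc ∑ b, ∑ c, (g x)⁻¹ b c *
        (covd1 g (fun y => nCov g y) a b x * 𝒦 x c + nCov g x b * covd1 g 𝒦 a c x)
        = (∑ b, ∑ c, (g x)⁻¹ b c * (covd1 g (fun y => nCov g y) a b x * 𝒦 x c))
          + ∑ b, ∑ c, (g x)⁻¹ b c * (nCov g x b * covd1 g 𝒦 a c x) := by
          simp only [mul_add, Finset.sum_add_distrib]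
      _ = _ := by rw [t1, t2]
  rw [hsplit] at hGL
  linarith

end Layer5
section Layer6

variable {m : ℕ} {U : Set (Fin (m + 2) → ℝ)} (hUo : IsOpen U)
  {g : (Fin (m + 2) → ℝ) → Matrix (Fin (m + 2)) (Fin (m + 2)) ℝ}
  (hg : IsMetricOn U g) {ε : ℝ} (hfol : AdaptedFoliation U g ε)
  {x : Fin (m + 2) → ℝ} (hx : x ∈ U)
  {K : (Fin (m + 2) → ℝ) → Fin (m + 2) → ℝ}
  (hKsmooth : ∀ b, ContDiffOn ℝ (⊤ : ℕ∞) (fun x => K x b) U)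
  {Ω : (Fin (m + 2) → ℝ) → ℝ} (hK : IsCKV U g K Ω)
  {ζ : (Fin (m + 2) → ℝ) → ℝ} (hζ : ∀ x, ζ x = ε * ∑ a, nCon g x a * K x a)
  {𝒦 : (Fin (m + 2) → ℝ) → Fin (m + 2) → ℝ}
  (h𝒦 : ∀ x a, 𝒦 x a = ∑ b, proj g ε x b a * K x b)

include hUo hg hfol hx hKsmooth hζ h𝒦

lemma hCKfull (l p : Fin (m + 2)) :
    covd1 g K l p x = covd1 g 𝒦 l p x + pd l ζ x * nCov g x p
      + ζ x * covd1 g (fun y => nCov g y) l p x := by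
  have h := covd_decomp hUo hg hfol hx hKsmooth hζ h𝒦 l p
  linarith

omit hKsmooth hζ h𝒦 in
lemma sff_symm (a b : Fin (m + 2)) : sff g ε x a b = sff g ε x b a := by
  have hz1 : ∑ p, proj g ε x p b * (if p = 0 then (1:ℝ) else 0) = 0 := by
    rw [sum_delta_r]; exact proj_zero hg hfol hx b
  have hsw : sff g ε x b a = ∑ l, ∑ p, proj g ε x l a * proj g ε x p b *
      covd1 g (fun y => nCov g y) p l x := by
    unfold sff
    rw [Finset.sum_comm]
    exact Finset.sum_congr rfl fun l _ => Finset.sum_congr rfl fun p _ => by ring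
  rw [hsw]
  unfold sff
  calc ∑ l, ∑ p, proj g ε x l a * proj g ε x p b * covd1 g (fun y => nCov g y) l p x
      = ∑ l, ∑ p, (proj g ε x l a * proj g ε x p b * covd1 g (fun y => nCov g y) p l x
        + (proj g ε x l a * pd l (fun y => lapse g y) x) *
            (proj g ε x p b * (if p = 0 then (1:ℝ) else 0))
        - (proj g ε x l a * (if l = 0 then (1:ℝ) else 0)) *
            (proj g ε x p b * pd p (fun y => lapse g y) x)) := by
        refine Finset.sum_congr rfl fun l _ => Finset.sum_congr rfl fun p _ => ?_
        rw [covd_n_antisym hUo hg hfol hx l p]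
        ring
    _ = ∑ l, ∑ p, proj g ε x l a * proj g ε x p b * covd1 g (fun y => nCov g y) p l x := by
        simp only [Finset.sum_add_distrib, Finset.sum_sub_distrib]
        have e1 : ∑ l, ∑ p, (proj g ε x l a * pd l (fun y => lapse g y) x) *
            (proj g ε x p b * (if p = 0 then (1:ℝ) else 0)) = 0 := by
          refine Finset.sum_eq_zero fun l _ => ?_
          rw [← Finset.mul_sum, hz1, mul_zero]
        have e2 : ∑ l, ∑ p, (proj g ε x l a * (if l = 0 then (1:ℝ) else 0)) *
            (proj g ε x p b * pd p (fun y => lapse g y) x) = 0 := by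
          refine Finset.sum_eq_zero fun l _ => ?_
          by_cases hl : l = 0
          · rw [← Finset.mul_sum, hl, proj_zero hg hfol hx a]
            simp
          · simp [hl]
        rw [e1, e2]
        ring

include hK in
lemma part_i (a b : Fin (m + 2)) :
    (∑ l, ∑ p, proj g ε x l a * proj g ε x p b * covd1 g 𝒦 l p x) +
      (∑ l, ∑ p, proj g ε x l b * proj g ε x p a * covd1 g 𝒦 l p x) +
      2 * ζ x * sff g ε x a b = 2 * Ω x * hInd g ε x a b := by
  have hgproj : ∑ l, ∑ p, proj g ε x l a * (proj g ε x p b * g x l p)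
      = hInd g ε x a b := by
    calc ∑ l, ∑ p, proj g ε x l a * (proj g ε x p b * g x l p)
        = ∑ p, ∑ l, proj g ε x l a * (proj g ε x p b * g x l p) := Finset.sum_comm
      _ = ∑ p, proj g ε x p b * hInd g ε x a p := by
          refine Finset.sum_congr rfl fun p _ => ?_
          rw [← proj_g hg hfol hx a p, Finset.mul_sum]
          exact Finset.sum_congr rfl fun l _ => by ring
      _ = hInd g ε x a b := proj_hInd hg hfol hx a b
  have hF : ∑ l, ∑ p, proj g ε x l a * proj g ε x p b * covd1 g 𝒦 p l x
      = ∑ l, ∑ p, proj g ε x l b * proj g ε x p a * covd1 g 𝒦 l p x := by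
    rw [Finset.sum_comm]
    exact Finset.sum_congr rfl fun l _ => Finset.sum_congr rfl fun p _ => by ring
  have hG1 : ∑ l, ∑ p, (proj g ε x l a * pd l ζ x) * (proj g ε x p b * nCov g x p) = 0 := by
    refine Finset.sum_eq_zero fun l _ => ?_
    rw [← Finset.mul_sum, projnCov hg hfol hx b, mul_zero]
  have hG2 : ∑ l, ∑ p, (proj g ε x l a * nCov g x l) * (proj g ε x p b * pd p ζ x) = 0 := by
    calc ∑ l, ∑ p, (proj g ε x l a * nCov g x l) * (proj g ε x p b * pd p ζ x)
        = ∑ l, (proj g ε x l a * nCov g x l) * (∑ p, proj g ε x p b * pd p ζ x) := by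
          refine Finset.sum_congr rfl fun l _ => ?_
          rw [Finset.mul_sum]
      _ = (∑ l, proj g ε x l a * nCov g x l) * (∑ p, proj g ε x p b * pd p ζ x) := by
          rw [Finset.sum_mul]
      _ = 0 := by rw [projnCov hg hfol hx a, zero_mul]
  have hH2 : ∑ l, ∑ p, ζ x * (proj g ε x l a * proj g ε x p b *
        covd1 g (fun y => nCov g y) p l x)
      = ζ x * sff g ε x a b := by
    rw [show sff g ε x a b = sff g ε x b a from sff_symm hUo hg hfol hx a b]
    unfold sff
    simp only [Finset.mul_sum]
    rw [Finset.sum_comm]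
    exact Finset.sum_congr rfl fun l _ => Finset.sum_congr rfl fun p _ => by ring
  have hH1 : ∑ l, ∑ p, ζ x * (proj g ε x l a * proj g ε x p b *
        covd1 g (fun y => nCov g y) l p x)
      = ζ x * sff g ε x a b := by
    unfold sff
    simp only [Finset.mul_sum]
  calc (∑ l, ∑ p, proj g ε x l a * proj g ε x p b * covd1 g 𝒦 l p x) +
      (∑ l, ∑ p, proj g ε x l b * proj g ε x p a * covd1 g 𝒦 l p x) +
      2 * ζ x * sff g ε x a b
      = (∑ l, ∑ p, proj g ε x l a * proj g ε x p b * covd1 g 𝒦 l p x) +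
        (∑ l, ∑ p, proj g ε x l a * proj g ε x p b * covd1 g 𝒦 p l x) +
        (∑ l, ∑ p, (proj g ε x l a * pd l ζ x) * (proj g ε x p b * nCov g x p)) +
        (∑ l, ∑ p, (proj g ε x l a * nCov g x l) * (proj g ε x p b * pd p ζ x)) +
        (∑ l, ∑ p, ζ x * (proj g ε x l a * proj g ε x p b *
          covd1 g (fun y => nCov g y) l p x)) +
        (∑ l, ∑ p, ζ x * (proj g ε x l a * proj g ε x p b *
          covd1 g (fun y => nCov g y) p l x)) := by
        rw [hF, hG1, hG2, hH1, hH2]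
        ring
    _ = ∑ l, ∑ p, proj g ε x l a * proj g ε x p b *
          (covd1 g K l p x + covd1 g K p l x) := by
        simp only [← Finset.sum_add_distrib]
        refine Finset.sum_congr rfl fun l _ => Finset.sum_congr rfl fun p _ => ?_
        rw [hCKfull hUo hg hfol hx hKsmooth hζ h𝒦 l p,
          hCKfull hUo hg hfol hx hKsmooth hζ h𝒦 p l]
        ring
    _ = ∑ l, ∑ p, (2 * Ω x) * (proj g ε x l a * (proj g ε x p b * g x l p)) := by
        refine Finset.sum_congr rfl fun l _ => Finset.sum_congr rfl fun p _ => ?_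
        rw [hK x hx l p]
        ring
    _ = 2 * Ω x * hInd g ε x a b := by
        rw [← hgproj, Finset.mul_sum]
        exact Finset.sum_congr rfl fun l _ => by rw [Finset.mul_sum]

lemma Kup0 : ∑ c, (g x)⁻¹ 0 c * 𝒦 x c = 0 := Gi0𝒦 hg hfol hζ h𝒦 hx

lemma projKup (l : Fin (m + 2)) :
    ∑ b, proj g ε x l b * (∑ c, (g x)⁻¹ b c * 𝒦 x c)
      = ∑ c, (g x)⁻¹ l c * 𝒦 x c := by
  have he := eps_mul hg hfol
  calc ∑ b, proj g ε x l b * (∑ c, (g x)⁻¹ b c * 𝒦 x c)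
      = ∑ b, ((if l = b then (1:ℝ) else 0) * (∑ c, (g x)⁻¹ b c * 𝒦 x c)
          - ε * nCon g x l * (nCov g x b * (∑ c, (g x)⁻¹ b c * 𝒦 x c))) := by
        refine Finset.sum_congr rfl fun b _ => ?_
        rw [proj]; ring
    _ = (∑ c, (g x)⁻¹ l c * 𝒦 x c)
        - ε * nCon g x l * ∑ b, nCov g x b * (∑ c, (g x)⁻¹ b c * 𝒦 x c) := by
        rw [Finset.sum_sub_distrib, sum_delta', ← Finset.mul_sum]
    _ = ∑ c, (g x)⁻¹ l c * 𝒦 x c := by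
        rw [sum_nCov_weight hg hfol x (fun b => ∑ c, (g x)⁻¹ b c * 𝒦 x c),
          Kup0 hUo hg hfol hx hKsmooth hζ h𝒦]
        ring

lemma KupIte : ∑ b, (∑ c, (g x)⁻¹ b c * 𝒦 x c) * (if b = 0 then (1:ℝ) else 0) = 0 := by
  rw [sum_delta_r]
  exact Kup0 hUo hg hfol hx hKsmooth hζ h𝒦

include hK in
lemma part_iii :
    (lapse g x)⁻¹ *
      (∑ b, (∑ a, (g x)⁻¹ b a * 𝒦 x a) * Dscal g ε (fun y => lapse g y) b x) +
    (∑ a, nCon g x a * pd a ζ x) = Ω x := by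
  have he := eps_mul hg hfol
  -- SK = Ω ε
  have hswap : ∑ a, ∑ b, nCon g x a * (nCon g x b * covd1 g K b a x)
      = ∑ a, ∑ b, nCon g x a * (nCon g x b * covd1 g K a b x) := by
    rw [Finset.sum_comm]
    exact Finset.sum_congr rfl fun a _ => Finset.sum_congr rfl fun b _ => by ring
  have hnng : ∑ a, ∑ b, nCon g x a * (nCon g x b * g x a b) = ε := by
    calc ∑ a, ∑ b, nCon g x a * (nCon g x b * g x a b)
        = ∑ a, nCon g x a * nCov g x a := by
          refine Finset.sum_congr rfl fun a _ => ?_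
          rw [← gn hg hfol hx a, Finset.mul_sum]
          exact Finset.sum_congr rfl fun b _ => by ring
      _ = ε := nn_eq hg hfol hx
  have star : ∑ a, ∑ b, nCon g x a * (nCon g x b * covd1 g K a b x) = Ω x * ε := by
    have h2 : (∑ a, ∑ b, nCon g x a * (nCon g x b * covd1 g K a b x))
        + ∑ a, ∑ b, nCon g x a * (nCon g x b * covd1 g K b a x)
        = ∑ a, ∑ b, (2 * Ω x) * (nCon g x a * (nCon g x b * g x a b)) := by
      simp only [← Finset.sum_add_distrib]
      refine Finset.sum_congr rfl fun a _ => Finset.sum_congr rfl fun b _ => ?_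
      linear_combination (nCon g x a * nCon g x b) * hK x hx a b
    rw [hswap] at h2
    have h3 : ∑ a, ∑ b, (2 * Ω x) * (nCon g x a * (nCon g x b * g x a b))
        = 2 * Ω x * ε := by
      rw [← hnng, Finset.mul_sum]
      exact Finset.sum_congr rfl fun a _ => by rw [Finset.mul_sum]
    rw [h3] at h2
    linarith
  -- expansion
  have hT3 : ∑ a, ∑ b, nCon g x a * (nCon g x b * (ζ x * covd1 g (fun y => nCov g y) a b x)) = 0 := by
    refine Finset.sum_eq_zero fun a _ => ?_
    have : ∑ b, nCon g x b * (ζ x * covd1 g (fun y => nCov g y) a b x)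
        = ζ x * ∑ b, nCon g x b * covd1 g (fun y => nCov g y) a b x := by
      rw [Finset.mul_sum]
      exact Finset.sum_congr rfl fun b _ => by ring
    rw [← Finset.mul_sum, this, GLnn hUo hg hfol hx a, mul_zero, mul_zero]
  have hT2 : ∑ a, ∑ b, nCon g x a * (nCon g x b * (pd a ζ x * nCov g x b))
      = ε * ∑ a, nCon g x a * pd a ζ x := by
    calc ∑ a, ∑ b, nCon g x a * (nCon g x b * (pd a ζ x * nCov g x b))
        = ∑ a, (nCon g x a * pd a ζ x) * ∑ b, nCon g x b * nCov g x b := by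
          refine Finset.sum_congr rfl fun a _ => ?_
          rw [Finset.mul_sum]
          exact Finset.sum_congr rfl fun b _ => by ring
      _ = ∑ a, (nCon g x a * pd a ζ x) * ε := by
          refine Finset.sum_congr rfl fun a _ => by rw [nn_eq hg hfol hx]
      _ = ε * ∑ a, nCon g x a * pd a ζ x := by
          rw [Finset.mul_sum]
          exact Finset.sum_congr rfl fun a _ => by ring
  have hT1 : ∑ a, ∑ b, nCon g x a * (nCon g x b * covd1 g 𝒦 a b x)
      = nCon g x 0 * ∑ b, (∑ c, (g x)⁻¹ b c * 𝒦 x c) * pd b (fun y => lapse g y) x := by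
    have step1 : ∀ a, ∑ b, nCon g x b * covd1 g 𝒦 a b x
        = -∑ b, (∑ c, (g x)⁻¹ b c * 𝒦 x c) * covd1 g (fun y => nCov g y) a b x :=
      GLn𝒦 hUo hg hfol hx hKsmooth hζ h𝒦
    have step2 : ∀ a, ∑ b, (∑ c, (g x)⁻¹ b c * 𝒦 x c) * covd1 g (fun y => nCov g y) a b x
        = ∑ b, (∑ c, (g x)⁻¹ b c * 𝒦 x c) * covd1 g (fun y => nCov g y) b a x
          + pd a (fun y => lapse g y) x *
              (∑ b, (∑ c, (g x)⁻¹ b c * 𝒦 x c) * (if b = 0 then (1:ℝ) else 0))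
          - (if a = 0 then (1:ℝ) else 0) *
              (∑ b, (∑ c, (g x)⁻¹ b c * 𝒦 x c) * pd b (fun y => lapse g y) x) := by
      intro a
      rw [Finset.mul_sum, Finset.mul_sum, ← Finset.sum_add_distrib, ← Finset.sum_sub_distrib]
      refine Finset.sum_congr rfl fun b _ => ?_
      rw [covd_n_antisym hUo hg hfol hx a b]
      ring
    have step3 : ∀ a, ∑ b, nCon g x b * covd1 g 𝒦 a b x
        = -∑ b, (∑ c, (g x)⁻¹ b c * 𝒦 x c) * covd1 g (fun y => nCov g y) b a x
          + (if a = 0 then (1:ℝ) else 0) *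
              (∑ b, (∑ c, (g x)⁻¹ b c * 𝒦 x c) * pd b (fun y => lapse g y) x) := by
      intro a
      rw [step1 a, step2 a, KupIte hUo hg hfol hx hKsmooth hζ h𝒦]
      ring
    have piece1 : ∑ a, nCon g x a *
        (∑ b, (∑ c, (g x)⁻¹ b c * 𝒦 x c) * covd1 g (fun y => nCov g y) b a x) = 0 := by
      calc ∑ a, nCon g x a *
          (∑ b, (∑ c, (g x)⁻¹ b c * 𝒦 x c) * covd1 g (fun y => nCov g y) b a x)
          = ∑ a, ∑ b, (∑ c, (g x)⁻¹ b c * 𝒦 x c) *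
              (nCon g x a * covd1 g (fun y => nCov g y) b a x) := by
            refine Finset.sum_congr rfl fun a _ => ?_
            rw [Finset.mul_sum]
            exact Finset.sum_congr rfl fun b _ => by ring
        _ = ∑ b, (∑ c, (g x)⁻¹ b c * 𝒦 x c) *
              (∑ a, nCon g x a * covd1 g (fun y => nCov g y) b a x) := by
            rw [Finset.sum_comm]
            exact Finset.sum_congr rfl fun b _ => by rw [Finset.mul_sum]
        _ = 0 := by
            refine Finset.sum_eq_zero fun b _ => ?_
            rw [GLnn hUo hg hfol hx b, mul_zero]
    calc ∑ a, ∑ b, nCon g x a * (nCon g x b * covd1 g 𝒦 a b x)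
        = ∑ a, nCon g x a * (∑ b, nCon g x b * covd1 g 𝒦 a b x) := by
          refine Finset.sum_congr rfl fun a _ => by rw [Finset.mul_sum]
      _ = ∑ a, (-(nCon g x a *
            (∑ b, (∑ c, (g x)⁻¹ b c * 𝒦 x c) * covd1 g (fun y => nCov g y) b a x))
          + (nCon g x a * (if a = 0 then (1:ℝ) else 0)) *
              (∑ b, (∑ c, (g x)⁻¹ b c * 𝒦 x c) * pd b (fun y => lapse g y) x)) := by
          refine Finset.sum_congr rfl fun a _ => ?_
          rw [step3 a]
          ring
      _ = -(∑ a, nCon g x a *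
            (∑ b, (∑ c, (g x)⁻¹ b c * 𝒦 x c) * covd1 g (fun y => nCov g y) b a x))
          + (∑ a, nCon g x a * (if a = 0 then (1:ℝ) else 0)) *
              (∑ b, (∑ c, (g x)⁻¹ b c * 𝒦 x c) * pd b (fun y => lapse g y) x) := by
          rw [Finset.sum_add_distrib, Finset.sum_neg_distrib, Finset.sum_mul]
      _ = nCon g x 0 * ∑ b, (∑ c, (g x)⁻¹ b c * 𝒦 x c) * pd b (fun y => lapse g y) x := by
          rw [piece1, sum_delta_r]
          ring
  -- assemble star
  have hsplit : ∑ a, ∑ b, nCon g x a * (nCon g x b * covd1 g K a b x)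
      = (∑ a, ∑ b, nCon g x a * (nCon g x b * covd1 g 𝒦 a b x))
        + (∑ a, ∑ b, nCon g x a * (nCon g x b * (pd a ζ x * nCov g x b)))
        + ∑ a, ∑ b, nCon g x a * (nCon g x b * (ζ x * covd1 g (fun y => nCov g y) a b x)) := by
    simp only [← Finset.sum_add_distrib]
    refine Finset.sum_congr rfl fun a _ => Finset.sum_congr rfl fun b _ => ?_
    rw [hCKfull hUo hg hfol hx hKsmooth hζ h𝒦 a b]
    ring
  rw [hT1, hT2, hT3, add_zero] at hsplit
  rw [hsplit] at star
  -- Dscal reduction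
  have hDred : ∑ b, (∑ a, (g x)⁻¹ b a * 𝒦 x a) * Dscal g ε (fun y => lapse g y) b x
      = ∑ b, (∑ c, (g x)⁻¹ b c * 𝒦 x c) * pd b (fun y => lapse g y) x := by
    calc ∑ b, (∑ a, (g x)⁻¹ b a * 𝒦 x a) * Dscal g ε (fun y => lapse g y) b x
        = ∑ b, ∑ l, (∑ a, (g x)⁻¹ b a * 𝒦 x a) *
            (proj g ε x l b * pd l (fun y => lapse g y) x) := by
          refine Finset.sum_congr rfl fun b _ => ?_
          rw [Dscal, Finset.mul_sum]
      _ = ∑ l, ∑ b, (∑ a, (g x)⁻¹ b a * 𝒦 x a) *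
            (proj g ε x l b * pd l (fun y => lapse g y) x) := Finset.sum_comm
      _ = ∑ l, (∑ b, proj g ε x l b * (∑ a, (g x)⁻¹ b a * 𝒦 x a)) *
            pd l (fun y => lapse g y) x := by
          refine Finset.sum_congr rfl fun l _ => ?_
          rw [Finset.sum_mul]
          exact Finset.sum_congr rfl fun b _ => by ring
      _ = ∑ b, (∑ c, (g x)⁻¹ b c * 𝒦 x c) * pd b (fun y => lapse g y) x := by
          refine Finset.sum_congr rfl fun l _ => ?_
          rw [projKup hUo hg hfol hx hKsmooth hζ h𝒦 l]
  rw [hDred]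
  -- final algebra
  have hinv : (lapse g x)⁻¹ = ε * nCon g x 0 := by
    have h1 := nCon_lapse hg hfol hx
    have h2 : lapse g x * (ε * nCon g x 0) = 1 := by
      linear_combination ε * h1 + he
    exact inv_eq_of_mul_eq_one_right h2
  rw [hinv]
  linear_combination ε * star
    + (Ω x - ∑ a, nCon g x a * pd a ζ x) * he

include hK in
lemma part_ii (ρ : Fin (m + 2)) :
    (∑ a, proj g ε x a ρ * ∑ b, nCon g x b * covd1 g 𝒦 b a x)
      = (∑ b, (∑ l, (g x)⁻¹ b l * sff g ε x l ρ) * 𝒦 x b)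
        + ε * ζ x * (lapse g x)⁻¹ * Dscal g ε (fun y => lapse g y) ρ x
        - ε * Dscal g ε ζ ρ x := by
  have he := eps_mul hg hfol
  -- X identification
  have hX : ∑ b, (∑ l, (g x)⁻¹ b l * sff g ε x l ρ) * 𝒦 x b
      = ∑ a, proj g ε x a ρ *
          ∑ b, (∑ c, (g x)⁻¹ b c * 𝒦 x c) * covd1 g (fun y => nCov g y) b a x := by
    calc ∑ b, (∑ l, (g x)⁻¹ b l * sff g ε x l ρ) * 𝒦 x b
        = ∑ b, ∑ l, (g x)⁻¹ b l * sff g ε x l ρ * 𝒦 x b := by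
          refine Finset.sum_congr rfl fun b _ => ?_
          rw [Finset.sum_mul]
      _ = ∑ l, ∑ b, (g x)⁻¹ b l * sff g ε x l ρ * 𝒦 x b := Finset.sum_comm
      _ = ∑ l, (∑ b, (g x)⁻¹ l b * 𝒦 x b) * sff g ε x l ρ := by
          refine Finset.sum_congr rfl fun l _ => ?_
          rw [Finset.sum_mul]
          refine Finset.sum_congr rfl fun b _ => ?_
          rw [Gi_symm hg hx b l]; ring
      _ = ∑ l, ∑ s, ∑ p, (∑ b, (g x)⁻¹ l b * 𝒦 x b) *
            (proj g ε x s l * proj g ε x p ρ * covd1 g (fun y => nCov g y) s p x) := by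
          refine Finset.sum_congr rfl fun l _ => ?_
          unfold sff
          simp only [Finset.mul_sum]
      _ = ∑ p, ∑ s, ∑ l, (∑ b, (g x)⁻¹ l b * 𝒦 x b) *
            (proj g ε x s l * proj g ε x p ρ * covd1 g (fun y => nCov g y) s p x) :=
          sum3_swap13 _
      _ = ∑ p, ∑ s, (∑ c, (g x)⁻¹ s c * 𝒦 x c) *
            (proj g ε x p ρ * covd1 g (fun y => nCov g y) s p x) := by
          refine Finset.sum_congr rfl fun p _ => Finset.sum_congr rfl fun s _ => ?_
          have e : ∑ l, (∑ b, (g x)⁻¹ l b * 𝒦 x b) *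
              (proj g ε x s l * proj g ε x p ρ * covd1 g (fun y => nCov g y) s p x)
              = (∑ l, proj g ε x s l * (∑ b, (g x)⁻¹ l b * 𝒦 x b)) *
                  (proj g ε x p ρ * covd1 g (fun y => nCov g y) s p x) := by
            rw [Finset.sum_mul]
            exact Finset.sum_congr rfl fun l _ => by ring
          rw [e, projKup hUo hg hfol hx hKsmooth hζ h𝒦 s]
      _ = ∑ a, proj g ε x a ρ *
            ∑ b, (∑ c, (g x)⁻¹ b c * 𝒦 x c) * covd1 g (fun y => nCov g y) b a x := by
          refine Finset.sum_congr rfl fun a _ => ?_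
          rw [Finset.mul_sum]
          exact Finset.sum_congr rfl fun b _ => by ring
  -- the contracted CKV equation
  have hsymm : ∀ a b : Fin (m + 2), g x a b = g x b a := hg.2.1 x hx
  have zero : ∑ a, proj g ε x a ρ *
      (∑ b, nCon g x b * (covd1 g K b a x + covd1 g K a b x)) = 0 := by
    have inner : ∀ a, ∑ b, nCon g x b * (covd1 g K b a x + covd1 g K a b x)
        = 2 * Ω x * nCov g x a := by
      intro a
      calc ∑ b, nCon g x b * (covd1 g K b a x + covd1 g K a b x)
          = ∑ b, 2 * Ω x * (g x a b * nCon g x b) := by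
            refine Finset.sum_congr rfl fun b _ => ?_
            linear_combination nCon g x b * hK x hx b a - 2 * Ω x * nCon g x b * hsymm a b
        _ = 2 * Ω x * ∑ b, g x a b * nCon g x b := by rw [Finset.mul_sum]
        _ = 2 * Ω x * nCov g x a := by rw [gn hg hfol hx a]
    calc ∑ a, proj g ε x a ρ *
        (∑ b, nCon g x b * (covd1 g K b a x + covd1 g K a b x))
        = ∑ a, 2 * Ω x * (proj g ε x a ρ * nCov g x a) := by
          refine Finset.sum_congr rfl fun a _ => ?_
          rw [inner a]; ring
      _ = 2 * Ω x * ∑ a, proj g ε x a ρ * nCov g x a := by rw [Finset.mul_sum]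
      _ = 0 := by rw [projnCov hg hfol hx ρ, mul_zero]
  -- split into six pieces
  have split : ∑ a, proj g ε x a ρ *
      (∑ b, nCon g x b * (covd1 g K b a x + covd1 g K a b x))
      = (∑ a, proj g ε x a ρ * ∑ b, nCon g x b * covd1 g 𝒦 b a x)
        + (∑ a, proj g ε x a ρ * ∑ b, nCon g x b * covd1 g 𝒦 a b x)
        + (∑ a, proj g ε x a ρ * ∑ b, nCon g x b * (pd b ζ x * nCov g x a))
        + (∑ a, proj g ε x a ρ * ∑ b, nCon g x b * (pd a ζ x * nCov g x b))
        + (∑ a, proj g ε x a ρ * ∑ b, nCon g x b *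
            (ζ x * covd1 g (fun y => nCov g y) b a x))
        + (∑ a, proj g ε x a ρ * ∑ b, nCon g x b *
            (ζ x * covd1 g (fun y => nCov g y) a b x)) := by
    have inner : ∀ a, ∑ b, nCon g x b * (covd1 g K b a x + covd1 g K a b x)
        = (∑ b, nCon g x b * covd1 g 𝒦 b a x)
          + (∑ b, nCon g x b * covd1 g 𝒦 a b x)
          + (∑ b, nCon g x b * (pd b ζ x * nCov g x a))
          + (∑ b, nCon g x b * (pd a ζ x * nCov g x b))
          + (∑ b, nCon g x b * (ζ x * covd1 g (fun y => nCov g y) b a x))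
          + (∑ b, nCon g x b * (ζ x * covd1 g (fun y => nCov g y) a b x)) := by
      intro a
      simp only [← Finset.sum_add_distrib]
      refine Finset.sum_congr rfl fun b _ => ?_
      rw [hCKfull hUo hg hfol hx hKsmooth hζ h𝒦 b a,
        hCKfull hUo hg hfol hx hKsmooth hζ h𝒦 a b]
      ring
    calc ∑ a, proj g ε x a ρ *
        (∑ b, nCon g x b * (covd1 g K b a x + covd1 g K a b x))
        = ∑ a, (proj g ε x a ρ * (∑ b, nCon g x b * covd1 g 𝒦 b a x)
          + proj g ε x a ρ * (∑ b, nCon g x b * covd1 g 𝒦 a b x)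
          + proj g ε x a ρ * (∑ b, nCon g x b * (pd b ζ x * nCov g x a))
          + proj g ε x a ρ * (∑ b, nCon g x b * (pd a ζ x * nCov g x b))
          + proj g ε x a ρ * (∑ b, nCon g x b *
              (ζ x * covd1 g (fun y => nCov g y) b a x))
          + proj g ε x a ρ * (∑ b, nCon g x b *
              (ζ x * covd1 g (fun y => nCov g y) a b x))) := by
          refine Finset.sum_congr rfl fun a _ => ?_
          rw [inner a]; ring
      _ = _ := by simp only [Finset.sum_add_distrib]
  -- evaluate pieces
  have hA2 : ∑ a, proj g ε x a ρ * ∑ b, nCon g x b * covd1 g 𝒦 a b x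
      = -(∑ a, proj g ε x a ρ *
          ∑ b, (∑ c, (g x)⁻¹ b c * 𝒦 x c) * covd1 g (fun y => nCov g y) b a x) := by
    have step : ∀ a, ∑ b, (∑ c, (g x)⁻¹ b c * 𝒦 x c) * covd1 g (fun y => nCov g y) a b x
        = ∑ b, (∑ c, (g x)⁻¹ b c * 𝒦 x c) * covd1 g (fun y => nCov g y) b a x
          + pd a (fun y => lapse g y) x *
              (∑ b, (∑ c, (g x)⁻¹ b c * 𝒦 x c) * (if b = 0 then (1:ℝ) else 0))
          - (if a = 0 then (1:ℝ) else 0) *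
              (∑ b, (∑ c, (g x)⁻¹ b c * 𝒦 x c) * pd b (fun y => lapse g y) x) := by
      intro a
      rw [Finset.mul_sum, Finset.mul_sum, ← Finset.sum_add_distrib, ← Finset.sum_sub_distrib]
      refine Finset.sum_congr rfl fun b _ => ?_
      rw [covd_n_antisym hUo hg hfol hx a b]
      ring
    have hB0 : ∑ a, proj g ε x a ρ * ((if a = 0 then (1:ℝ) else 0) *
        (∑ b, (∑ c, (g x)⁻¹ b c * 𝒦 x c) * pd b (fun y => lapse g y) x)) = 0 := by
      refine Finset.sum_eq_zero fun a _ => ?_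
      by_cases ha : a = 0
      · rw [ha, proj_zero hg hfol hx ρ, zero_mul]
      · simp [ha]
    calc ∑ a, proj g ε x a ρ * ∑ b, nCon g x b * covd1 g 𝒦 a b x
        = ∑ a, proj g ε x a ρ *
            (-∑ b, (∑ c, (g x)⁻¹ b c * 𝒦 x c) * covd1 g (fun y => nCov g y) a b x) := by
          refine Finset.sum_congr rfl fun a _ => ?_
          rw [GLn𝒦 hUo hg hfol hx hKsmooth hζ h𝒦 a]
      _ = ∑ a, (-(proj g ε x a ρ *
            ∑ b, (∑ c, (g x)⁻¹ b c * 𝒦 x c) * covd1 g (fun y => nCov g y) b a x)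
          + proj g ε x a ρ * ((if a = 0 then (1:ℝ) else 0) *
            (∑ b, (∑ c, (g x)⁻¹ b c * 𝒦 x c) * pd b (fun y => lapse g y) x))) := by
          refine Finset.sum_congr rfl fun a _ => ?_
          rw [step a, KupIte hUo hg hfol hx hKsmooth hζ h𝒦]
          ring
      _ = -(∑ a, proj g ε x a ρ *
            ∑ b, (∑ c, (g x)⁻¹ b c * 𝒦 x c) * covd1 g (fun y => nCov g y) b a x) := by
          rw [Finset.sum_add_distrib, Finset.sum_neg_distrib, hB0, add_zero]
  have hA3 : ∑ a, proj g ε x a ρ * ∑ b, nCon g x b * (pd b ζ x * nCov g x a) = 0 := by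
    calc ∑ a, proj g ε x a ρ * ∑ b, nCon g x b * (pd b ζ x * nCov g x a)
        = ∑ a, (proj g ε x a ρ * nCov g x a) * (∑ b, nCon g x b * pd b ζ x) := by
          refine Finset.sum_congr rfl fun a _ => ?_
          rw [Finset.mul_sum, Finset.mul_sum]
          exact Finset.sum_congr rfl fun b _ => by ring
      _ = (∑ a, proj g ε x a ρ * nCov g x a) * (∑ b, nCon g x b * pd b ζ x) := by
          rw [Finset.sum_mul]
      _ = 0 := by rw [projnCov hg hfol hx ρ, zero_mul]
  have hA4 : ∑ a, proj g ε x a ρ * ∑ b, nCon g x b * (pd a ζ x * nCov g x b)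
      = ε * Dscal g ε ζ ρ x := by
    have inner : ∀ a, ∑ b, nCon g x b * (pd a ζ x * nCov g x b) = pd a ζ x * ε := by
      intro a
      calc ∑ b, nCon g x b * (pd a ζ x * nCov g x b)
          = ∑ b, pd a ζ x * (nCon g x b * nCov g x b) :=
            Finset.sum_congr rfl fun b _ => by ring
        _ = pd a ζ x * ∑ b, nCon g x b * nCov g x b := (Finset.mul_sum _ _ _).symm
        _ = pd a ζ x * ε := by rw [nn_eq hg hfol hx]
    calc ∑ a, proj g ε x a ρ * ∑ b, nCon g x b * (pd a ζ x * nCov g x b)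
        = ∑ a, ε * (proj g ε x a ρ * pd a ζ x) := by
          refine Finset.sum_congr rfl fun a _ => ?_
          rw [inner a]; ring
      _ = ε * Dscal g ε ζ ρ x := by
          rw [Dscal, Finset.mul_sum]
  have hCnba : ∀ a, ∑ b, nCon g x b * covd1 g (fun y => nCov g y) b a x
      = (if a = 0 then (1:ℝ) else 0) *
          (∑ b, nCon g x b * pd b (fun y => lapse g y) x)
        - nCon g x 0 * pd a (fun y => lapse g y) x := by
    intro a
    calc ∑ b, nCon g x b * covd1 g (fun y => nCov g y) b a x
        = ∑ b, (nCon g x b * covd1 g (fun y => nCov g y) a b x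
          + (if a = 0 then (1:ℝ) else 0) * (nCon g x b * pd b (fun y => lapse g y) x)
          - (nCon g x b * (if b = 0 then (1:ℝ) else 0)) * pd a (fun y => lapse g y) x) := by
          refine Finset.sum_congr rfl fun b _ => ?_
          rw [covd_n_antisym hUo hg hfol hx b a]
          ring
      _ = (∑ b, nCon g x b * covd1 g (fun y => nCov g y) a b x)
          + (if a = 0 then (1:ℝ) else 0) *
            (∑ b, nCon g x b * pd b (fun y => lapse g y) x)
          - (∑ b, nCon g x b * (if b = 0 then (1:ℝ) else 0)) *
            pd a (fun y => lapse g y) x := by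
          rw [Finset.sum_sub_distrib, Finset.sum_add_distrib, ← Finset.mul_sum,
            ← Finset.sum_mul]
      _ = (if a = 0 then (1:ℝ) else 0) *
            (∑ b, nCon g x b * pd b (fun y => lapse g y) x)
          - nCon g x 0 * pd a (fun y => lapse g y) x := by
          rw [GLnn hUo hg hfol hx a, sum_delta_r]
          ring
  have hA5 : ∑ a, proj g ε x a ρ * ∑ b, nCon g x b *
        (ζ x * covd1 g (fun y => nCov g y) b a x)
      = -(ζ x * nCon g x 0 * Dscal g ε (fun y => lapse g y) ρ x) := by
    have inner : ∀ a, ∑ b, nCon g x b * (ζ x * covd1 g (fun y => nCov g y) b a x)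
        = ζ x * ((if a = 0 then (1:ℝ) else 0) *
            (∑ b, nCon g x b * pd b (fun y => lapse g y) x)
          - nCon g x 0 * pd a (fun y => lapse g y) x) := by
      intro a
      calc ∑ b, nCon g x b * (ζ x * covd1 g (fun y => nCov g y) b a x)
          = ∑ b, ζ x * (nCon g x b * covd1 g (fun y => nCov g y) b a x) :=
            Finset.sum_congr rfl fun b _ => by ring
        _ = ζ x * ∑ b, nCon g x b * covd1 g (fun y => nCov g y) b a x :=
            (Finset.mul_sum _ _ _).symm
        _ = _ := by rw [hCnba a]
    calc ∑ a, proj g ε x a ρ * ∑ b, nCon g x b *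
          (ζ x * covd1 g (fun y => nCov g y) b a x)
        = ∑ a, ((ζ x * (∑ b, nCon g x b * pd b (fun y => lapse g y) x)) *
            (proj g ε x a ρ * (if a = 0 then (1:ℝ) else 0))
          - (ζ x * nCon g x 0) * (proj g ε x a ρ * pd a (fun y => lapse g y) x)) := by
          refine Finset.sum_congr rfl fun a _ => ?_
          rw [inner a]; ring
      _ = (ζ x * (∑ b, nCon g x b * pd b (fun y => lapse g y) x)) *
            (∑ a, proj g ε x a ρ * (if a = 0 then (1:ℝ) else 0))
          - (ζ x * nCon g x 0) * (∑ a, proj g ε x a ρ * pd a (fun y => lapse g y) x) := by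
          rw [Finset.sum_sub_distrib, ← Finset.mul_sum, ← Finset.mul_sum]
      _ = -(ζ x * nCon g x 0 * Dscal g ε (fun y => lapse g y) ρ x) := by
          rw [sum_delta_r, proj_zero hg hfol hx ρ, Dscal]
          ring
  have hA6 : ∑ a, proj g ε x a ρ * ∑ b, nCon g x b *
        (ζ x * covd1 g (fun y => nCov g y) a b x) = 0 := by
    refine Finset.sum_eq_zero fun a _ => ?_
    have : ∑ b, nCon g x b * (ζ x * covd1 g (fun y => nCov g y) a b x)
        = ζ x * ∑ b, nCon g x b * covd1 g (fun y => nCov g y) a b x := by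
      rw [Finset.mul_sum]
      exact Finset.sum_congr rfl fun b _ => by ring
    rw [this, GLnn hUo hg hfol hx a, mul_zero, mul_zero]
  -- collect
  rw [split, hA2, hA3, hA4, hA5, hA6] at zero
  have hinv : (lapse g x)⁻¹ = ε * nCon g x 0 := by
    have h1 := nCon_lapse hg hfol hx
    have h2 : lapse g x * (ε * nCon g x 0) = 1 := by
      linear_combination ε * h1 + he
    exact inv_eq_of_mul_eq_one_right h2
  rw [hX, hinv]
  linear_combination zero
    - ζ x * nCon g x 0 * Dscal g ε (fun y => lapse g y) ρ x * he

end Layer6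

/-- Proposition 3 of the paper: the split of the conformal Killing
vector equation with respect to an adapted foliation. -/
theorem conformal_killing_vector_split
    {m : ℕ} (U : Set (Fin (m + 2) → ℝ)) (hUo : IsOpen U) (hUc : IsConnected U)
    (g : (Fin (m + 2) → ℝ) → Matrix (Fin (m + 2)) (Fin (m + 2)) ℝ)
    (hg : IsMetricOn U g) (ε : ℝ) (hfol : AdaptedFoliation U g ε)
    (K : (Fin (m + 2) → ℝ) → Fin (m + 2) → ℝ)
    (hKsmooth : ∀ b, ContDiffOn ℝ (⊤ : ℕ∞) (fun x => K x b) U)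
    (Ω : (Fin (m + 2) → ℝ) → ℝ) (hK : IsCKV U g K Ω)
    -- normal component ζ = ε n^α K_α
    (ζ : (Fin (m + 2) → ℝ) → ℝ) (hζ : ∀ x, ζ x = ε * ∑ a, nCon g x a * K x a)
    -- tangential component 𝒦_α = h^β_α K_β
    (𝒦 : (Fin (m + 2) → ℝ) → Fin (m + 2) → ℝ)
    (h𝒦 : ∀ x a, 𝒦 x a = ∑ b, proj g ε x b a * K x b) :
    -- (i)  D_α 𝒦_β + D_β 𝒦_α + 2 ζ χ_{αβ} = 2 Ω h_{αβ}
    (∀ x ∈ U, ∀ a b,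
      (∑ l, ∑ p, proj g ε x l a * proj g ε x p b * covd1 g 𝒦 l p x) +
      (∑ l, ∑ p, proj g ε x l b * proj g ε x p a * covd1 g 𝒦 l p x) +
      2 * ζ x * sff g ε x a b = 2 * Ω x * hInd g ε x a b) ∧
    -- (ii) h^α_ρ n^β ∇_β 𝒦_α = χ^β_ρ 𝒦_β + ε ζ φ⁻¹ D_ρ φ − ε D_ρ ζ
    (∀ x ∈ U, ∀ ρ,
      (∑ a, proj g ε x a ρ * ∑ b, nCon g x b * covd1 g 𝒦 b a x) =
      (∑ b, (∑ l, (g x)⁻¹ b l * sff g ε x l ρ) * 𝒦 x b) +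
        ε * ζ x * (lapse g x)⁻¹ * Dscal g ε (fun y => lapse g y) ρ x -
        ε * Dscal g ε ζ ρ x) ∧
    -- (iii) φ⁻¹ 𝒦^β D_β φ + n^α ∂_α ζ = Ω
    (∀ x ∈ U,
      (lapse g x)⁻¹ *
        (∑ b, (∑ a, (g x)⁻¹ b a * 𝒦 x a) * Dscal g ε (fun y => lapse g y) b x) +
      (∑ a, nCon g x a * pd a ζ x) = Ω x) := by
  refine ⟨fun x hx a b => part_i hUo hg hfol hx hKsmooth hK hζ h𝒦 a b,
    fun x hx ρ => part_ii hUo hg hfol hx hKsmooth hK hζ h𝒦 ρ,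
    fun x hx => part_iii hUo hg hfol hx hKsmooth hK hζ h𝒦⟩

end
end

section
/- Let d ≥ 3, let β ∈ ℝ^d be nonzero, let χ be a symmetric d×d real matrix, and let α' ∈ ℝ^d, such that for all indices a, b, c ∈ {1,…,d}: β_a χ_{bc} + β_b χ_{ca} + β_c χ_{ab} = α'_a η_{bc} + α'_b η_{ca} + α'_c η_{ab}. Then there exists c₀ ∈ ℝ such that χ = c₀ η and α' = c₀ β. (This is the algebraic core of the paper's Proposition 5: in spacetime dimension m = d + 1 > 3, a nonzero mixed component β forces the slices to be totally umbilic.) -/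
open scoped BigOperators

noncomputable section

/-- The Minkowski bilinear form `η = diag(−1, 1, …, 1)` on `ℝ^d`. -/
def minkowski (d : ℕ) : Matrix (Fin (d + 3)) (Fin (d + 3)) ℝ :=
  fun a b => if a = b then (if a = 0 then (-1 : ℝ) else 1) else 0

/-!
Write `ε a = η a a` and `β ⊙ χ` for the symmetrized product `symmProd β χ`. Reading
`β ⊙ χ = α' ⊙ η` at the index patterns `(a, a, a)` and `(a, a, b)` gives
`β_a χ_aa = ε_a α'_a` and `2 β_a² χ_ab = ε_a (α'_b β_a − α'_a β_b)`; comparing the latter for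
`(a, b)` and `(b, a)` shows that the minor `α'_b β_a − α'_a β_b` vanishes as soon as
`ε_a β_b² + ε_b β_a² ≠ 0`. If some `β_c` is zero, the `(c, c, x)` equations already give
`α' ∥ β`. Otherwise the minor at two spacelike indices `i, j` vanishes, and the `(a, i, j)`
equation propagates this to every `a`, so `α' = c₀ β`. Then `β ⊙ (χ − c₀ η) = 0`, and `β ⊙ ψ = 0`
with `β ≠ 0` forces a symmetric `ψ` to vanish: the `(p, p, p)`, `(p, p, b)` and `(p, b, c)`
equations kill `ψ_pp`, `ψ_pb` and `ψ_bc` in turn for any `p` with `β_p ≠ 0`.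
-/

open Matrix

section SymmProd

variable {ι K : Type*} [Field K]

def symmProd (β : ι → K) (χ : Matrix ι ι K) (a b c : ι) : K :=
  β a * χ b c + β b * χ c a + β c * χ a b

theorem symmProd_smul_left (r : K) (β : ι → K) (χ : Matrix ι ι K) :
    symmProd (r • β) χ = symmProd β (r • χ) := by
  ext a b c
  simp only [symmProd, Pi.smul_apply, Matrix.smul_apply, smul_eq_mul]
  ring

theorem eq_zero_of_symmProd_eq_zero [CharZero K] {β : ι → K} {ψ : Matrix ι ι K} (hψ : ψ.IsSymm)
    (hβ : β ≠ 0) (h : symmProd β ψ = 0) : ψ = 0 := by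
  obtain ⟨p, hp⟩ : ∃ p, β p ≠ 0 := Function.ne_iff.mp hβ
  have hpp : ψ p p = 0 := by
    have := congr_fun₃ h p p p
    simp only [symmProd, Pi.zero_apply] at this
    simpa [hp] using (show 3 * β p * ψ p p = 0 by linear_combination this)
  have hpb (b : ι) : ψ p b = 0 := by
    have := congr_fun₃ h p p b
    simp only [symmProd, Pi.zero_apply, hψ.apply p b, hpp, mul_zero, add_zero] at this
    simpa [hp] using (show 2 * β p * ψ p b = 0 by linear_combination this)
  ext b c
  have := congr_fun₃ h p b c
  simp only [symmProd, Pi.zero_apply, hψ.apply p c, hpb, mul_zero, add_zero] at this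
  simpa [hp] using this

theorem eq_of_symmProd_eq [CharZero K] {β : ι → K} {χ χ' : Matrix ι ι K} (hχ : χ.IsSymm)
    (hχ' : χ'.IsSymm) (hβ : β ≠ 0) (h : symmProd β χ = symmProd β χ') : χ = χ' := by
  refine sub_eq_zero.mp (eq_zero_of_symmProd_eq_zero (hχ.sub hχ') hβ ?_)
  ext a b c
  have := congr_fun₃ h a b c
  simp only [symmProd, Matrix.sub_apply, Pi.zero_apply] at this ⊢
  linear_combination this

section Diagonal

variable [DecidableEq ι] {β α ε : ι → K} {χ : Matrix ι ι K}

theorem mul_apply_self_of_symmProd_eq [CharZero K] (h : symmProd β χ = symmProd α (diagonal ε))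
    (a : ι) : β a * χ a a = ε a * α a := by
  have := congr_fun₃ h a a a
  simp only [symmProd, diagonal_apply_eq] at this
  apply mul_left_cancel₀ (three_ne_zero : (3 : K) ≠ 0)
  linear_combination this

theorem mul_apply_add_of_symmProd_eq (h : symmProd β χ = symmProd α (diagonal ε))
    {a b : ι} (hab : a ≠ b) : β a * χ a b + β a * χ b a + β b * χ a a = ε a * α b := by
  have := congr_fun₃ h a a b
  simpa [symmProd, diagonal_apply_ne _ hab, diagonal_apply_ne _ hab.symm, mul_comm] using this

theorem sq_mul_apply_of_symmProd_eq [CharZero K] (hχ : χ.IsSymm)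
    (h : symmProd β χ = symmProd α (diagonal ε)) {a b : ι} (hab : a ≠ b) :
    2 * β a ^ 2 * χ a b = ε a * (α b * β a - α a * β b) := by
  have := mul_apply_add_of_symmProd_eq h hab
  rw [hχ.apply a b] at this
  linear_combination β a * this - β b * mul_apply_self_of_symmProd_eq h a

theorem eq_smul_of_apply_eq_zero [CharZero K] (h : symmProd β χ = symmProd α (diagonal ε))
    {c : ι} (hε : ε c ≠ 0) (hc : β c = 0) : α = (χ c c / ε c) • β := by
  funext x
  rw [Pi.smul_apply, smul_eq_mul, div_mul_eq_mul_div, eq_div_iff hε]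
  by_cases hxc : x = c
  · subst hxc
    have := mul_apply_self_of_symmProd_eq h x
    rw [hc, zero_mul, eq_comm, mul_eq_zero] at this
    simp [hc, this.resolve_left hε]
  · have := mul_apply_add_of_symmProd_eq h (Ne.symm hxc)
    rw [hc] at this
    linear_combination -this

theorem minor_mul_eq_zero_of_symmProd_eq [CharZero K] (hχ : χ.IsSymm)
    (h : symmProd β χ = symmProd α (diagonal ε)) {a b : ι} (hab : a ≠ b) :
    (α b * β a - α a * β b) * (ε a * β b ^ 2 + ε b * β a ^ 2) = 0 := by
  linear_combination β a ^ 2 * sq_mul_apply_of_symmProd_eq hχ h hab.symm -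
    β b ^ 2 * sq_mul_apply_of_symmProd_eq hχ h hab - 2 * β a ^ 2 * β b ^ 2 * hχ.apply a b

theorem minor_eq_zero_of_minor_eq_zero [CharZero K] (hχ : χ.IsSymm)
    (h : symmProd β χ = symmProd α (diagonal ε)) {a b c : ι} (hab : a ≠ b) (hac : a ≠ c)
    (hbc : b ≠ c) (hε : ε a ≠ 0) (hb : β b ≠ 0) (hc : β c ≠ 0)
    (hminor : α c * β b - α b * β c = 0) : α a * β b - α b * β a = 0 := by
  have hχbc : χ b c = 0 := by
    have := sq_mul_apply_of_symmProd_eq hχ h hbc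
    rw [hminor, mul_zero] at this
    simpa [hb] using this
  have htriple := congr_fun₃ h a b c
  simp only [symmProd, diagonal_apply_ne _ hab, diagonal_apply_ne _ hbc,
    diagonal_apply_ne _ hac.symm, mul_zero, add_zero, hχbc, hχ.apply a c] at htriple
  have key : 2 * ε a * β c * (α a * β b - α b * β a) = 0 := by
    linear_combination (-2 * β a ^ 2) * htriple + β b * sq_mul_apply_of_symmProd_eq hχ h hac
      + β c * sq_mul_apply_of_symmProd_eq hχ h hab + ε a * β a * hminor
  simpa [hε, hc] using key

theorem exists_smul_eq_of_symmProd_eq [LinearOrder K] [IsStrictOrderedRing K] (hχ : χ.IsSymm)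
    (h : symmProd β χ = symmProd α (diagonal ε)) (hε : ∀ a, ε a ≠ 0) {i j : ι} (hij : i ≠ j)
    (hi : 0 < ε i) (hj : 0 < ε j) : ∃ r : K, α = r • β := by
  by_cases hzero : ∃ c, β c = 0
  · obtain ⟨c, hc⟩ := hzero
    exact ⟨_, eq_smul_of_apply_eq_zero h (hε c) hc⟩
  push Not at hzero
  have hminor : α j * β i - α i * β j = 0 := by
    have hpos : 0 < ε i * β j ^ 2 + ε j * β i ^ 2 := by
      have := hzero i; have := hzero j; positivity
    exact (mul_eq_zero.mp (minor_mul_eq_zero_of_symmProd_eq hχ h hij)).resolve_right hpos.ne'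
  refine ⟨α i / β i, funext fun a => ?_⟩
  rw [Pi.smul_apply, smul_eq_mul, div_mul_eq_mul_div, eq_div_iff (hzero i)]
  by_cases hai : a = i
  · rw [hai]
  by_cases haj : a = j
  · rw [haj]; linear_combination hminor
  · linear_combination
      minor_eq_zero_of_minor_eq_zero hχ h hai haj hij (hε a) (hzero i) (hzero j) hminor

end Diagonal

end SymmProd

theorem minkowski_eq_diagonal (d : ℕ) :
    minkowski d = diagonal fun a => if a = 0 then -1 else 1 :=
  rfl

/-- algebraic core of Proposition 5 of the paper: in dimension
`d ≥ 3`, if `β ≠ 0` and `β_a χ_bc + β_b χ_ca + β_c χ_ab = α'_a η_bc + α'_b η_ca + α'_c η_ab`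
for a symmetric matrix `χ`, then `χ = c₀ η` and `α' = c₀ β` for some constant `c₀`. -/
theorem umbilic_from_mixed_component
    {d : ℕ} (β : Fin (d + 3) → ℝ) (hβ : β ≠ 0)
    (χ : Matrix (Fin (d + 3)) (Fin (d + 3)) ℝ) (hχ : ∀ a b, χ a b = χ b a)
    (α' : Fin (d + 3) → ℝ)
    (heq : ∀ a b c,
      β a * χ b c + β b * χ c a + β c * χ a b =
        α' a * minkowski d b c + α' b * minkowski d c a + α' c * minkowski d a b) :
    ∃ c₀ : ℝ, (∀ a b, χ a b = c₀ * minkowski d a b) ∧ (∀ a, α' a = c₀ * β a) := by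
  have hsymm : χ.IsSymm := IsSymm.ext fun a b => hχ b a
  have h : symmProd β χ = symmProd α' (minkowski d) := funext₃ heq
  obtain ⟨c₀, hα⟩ : ∃ c₀, α' = c₀ • β := by
    rw [minkowski_eq_diagonal] at h
    refine exists_smul_eq_of_symmProd_eq hsymm h (fun a => by split_ifs <;> norm_num)
      (i := ⟨1, by omega⟩) (j := ⟨2, by omega⟩) (by simp) ?_ ?_ <;> simp [Fin.ext_iff]
  have hχη : χ = c₀ • minkowski d := by
    refine eq_of_symmProd_eq hsymm ((isSymm_diagonal _).smul c₀) hβ ?_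
    rw [h, hα, symmProd_smul_left]
  exact ⟨c₀, fun a b => by rw [hχη]; rfl, fun a => by rw [hα]; rfl⟩

end
end

section
/- Let h be an invertible symmetric 2×2 real matrix with det h < 0 (signature (1,1)), let β ∈ ℝ² be nonzero and null (⟨β,β⟩ = 0), let σ be a symmetric 2×2 real matrix with h-trace zero (h^{ab} σ_{ab} = 0), and let α ∈ ℝ² with F := ⟨α,β⟩ ≠ 0, such that for all a, b, c ∈ {1,2}: β_a σ_{bc} + β_b σ_{ca} + β_c σ_{ab} = α_a h_{bc} + α_b h_{ca} + α_c h_{ab}. Then α is null (⟨α,α⟩ = 0), h_{ab} = (α_a β_b + β_a α_b)/F, and σ_{ab} = 2 α_a α_b / F. (This is case (c) of the paper's Proposition 5, occurring only in spacetime dimension m = 3.) -/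
/-!
Raise indices with `h⁻¹` and contract the identity `Sym(β ⊗ σ) = Sym(α ⊗ h)`. The `h`-trace over
two slots, with `tr σ = 0`, gives `σ β♯ = 2 α` in dimension two; a single contraction with `β♯`
(`β` null, `⟨α, β⟩ = F`) then gives `F h = α ⊗ β + β ⊗ α`, and contracting that twice with `α♯`
forces `⟨α, α⟩ = 0`. Finally the contraction of the identity with `α♯` reads
`β ⊗ τ + τ ⊗ β + F σ = 2 α ⊗ α` with `τ = σ α♯`; contracting once more with `α♯` gives
`(τ · α♯) β + 2 F τ = 0`, hence `3 F (τ · α♯) = 0`, so `τ = 0`.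
-/

open scoped BigOperators

noncomputable section

/-- The pairing `⟨u,v⟩ = h^{ab} u_a v_b` of covectors defined by the inverse
of the 2×2 matrix `h`. -/
def pairing (h : Matrix (Fin 2) (Fin 2) ℝ) (u v : Fin 2 → ℝ) : ℝ :=
  ∑ a, ∑ b, h⁻¹ a b * u a * v b

open Matrix

section

variable {𝕜 ι : Type*} [Field 𝕜] [Fintype ι]

-- For symmetric `σ` this is `3 • Sym(β ⊗ σ)`.
def symmetrizedProduct (β : ι → 𝕜) (σ : Matrix ι ι 𝕜) (a b c : ι) : 𝕜 :=
  β a * σ b c + β b * σ c a + β c * σ a b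

theorem of_sum_symmetrizedProduct_mul {σ : Matrix ι ι 𝕜} (hσ : σ.IsSymm) (β v : ι → 𝕜) :
    of (fun a b => ∑ c, symmetrizedProduct β σ a b c * v c) =
      vecMulVec β (σ *ᵥ v) + vecMulVec (σ *ᵥ v) β + (β ⬝ᵥ v) • σ := by
  ext a b
  simp only [of_apply, Matrix.add_apply, Matrix.smul_apply, vecMulVec_apply, smul_eq_mul,
    symmetrizedProduct, mulVec, dotProduct, Finset.mul_sum, Finset.sum_mul,
    ← Finset.sum_add_distrib]
  refine Finset.sum_congr rfl fun c _ => ?_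
  rw [hσ.apply c a]
  ring

theorem sum_sum_mul_symmetrizedProduct {σ g : Matrix ι ι 𝕜} (hσ : σ.IsSymm) (hg : g.IsSymm)
    (β : ι → 𝕜) (a : ι) :
    ∑ b, ∑ c, g b c * symmetrizedProduct β σ a b c =
      β a * ∑ b, ∑ c, g b c * σ b c + 2 * (σ *ᵥ g *ᵥ β) a := by
  have contract_row (b : ι) : ∑ c, g b c * symmetrizedProduct β σ a b c =
      β a * (σ *ᵥ g b) b + β b * (σ *ᵥ g b) a + (β ⬝ᵥ g b) * σ a b := by
    simpa [vecMulVec_apply, mul_comm] using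
      congrFun (congrFun (of_sum_symmetrizedProduct_mul hσ β (g b)) a) b
  have trace_term : ∑ b, β a * (σ *ᵥ g b) b = β a * ∑ b, ∑ c, g b c * σ b c := by
    simp only [mulVec, dotProduct, Finset.mul_sum, mul_comm (σ _ _)]
  have middle_term : ∑ b, β b * (σ *ᵥ g b) a = (σ *ᵥ g *ᵥ β) a := by
    simp only [mulVec, dotProduct, Finset.mul_sum]
    rw [Finset.sum_comm]
    refine Finset.sum_congr rfl fun c _ => Finset.sum_congr rfl fun b _ => ?_
    rw [hg.apply c b]
    ring
  have last_term : ∑ b, (β ⬝ᵥ g b) * σ a b = (σ *ᵥ g *ᵥ β) a := by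
    simp only [mulVec, dotProduct, Finset.mul_sum, Finset.sum_mul]
    refine Finset.sum_congr rfl fun b _ => Finset.sum_congr rfl fun c _ => ?_
    ring
  simp only [contract_row, Finset.sum_add_distrib, trace_term, middle_term, last_term]
  ring

theorem Matrix.IsSymm.dotProduct_mulVec_comm {g : Matrix ι ι 𝕜} (hg : g.IsSymm) (u v : ι → 𝕜) :
    u ⬝ᵥ g *ᵥ v = v ⬝ᵥ g *ᵥ u := by
  conv_lhs => rw [← hg.eq]
  exact dotProduct_transpose_mulVec g u v

theorem dotProduct_vecMulVec_mulVec (u x y w : ι → 𝕜) :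
    u ⬝ᵥ vecMulVec x y *ᵥ w = (u ⬝ᵥ x) * (y ⬝ᵥ w) := by
  simp [vecMulVec_mulVec, mul_comm]

variable {h σ : Matrix ι ι 𝕜} {α β : ι → 𝕜}

theorem contract_eq_of_symmetrizedProduct_eq (hh : h.IsSymm) (hσ : σ.IsSymm)
    (heq : symmetrizedProduct β σ = symmetrizedProduct α h) (v : ι → 𝕜) :
    vecMulVec β (σ *ᵥ v) + vecMulVec (σ *ᵥ v) β + (β ⬝ᵥ v) • σ =
      vecMulVec α (h *ᵥ v) + vecMulVec (h *ᵥ v) α + (α ⬝ᵥ v) • h := by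
  rw [← of_sum_symmetrizedProduct_mul hσ, ← of_sum_symmetrizedProduct_mul hh, heq]

variable [DecidableEq ι]

theorem mulVec_inv_mulVec (hdet : IsUnit h.det) (v : ι → 𝕜) : h *ᵥ h⁻¹ *ᵥ v = v := by
  rw [mulVec_mulVec, mul_nonsing_inv h hdet, one_mulVec]

theorem sum_sum_inv_mul_self (hh : h.IsSymm) (hdet : IsUnit h.det) :
    ∑ b, ∑ c, h⁻¹ b c * h b c = Fintype.card ι := by
  rw [← trace_one, ← mul_nonsing_inv h hdet, trace]
  refine Finset.sum_congr rfl fun b _ => ?_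
  rw [diag_apply, mul_apply]
  refine Finset.sum_congr rfl fun c _ => ?_
  rw [hh.inv.apply c b, mul_comm]

theorem two_smul_mulVec_inv_mulVec (hh : h.IsSymm) (hσ : σ.IsSymm) (hdet : IsUnit h.det)
    (heq : symmetrizedProduct β σ = symmetrizedProduct α h)
    (htr : ∑ b, ∑ c, h⁻¹ b c * σ b c = 0) :
    (2 : 𝕜) • σ *ᵥ h⁻¹ *ᵥ β = (Fintype.card ι + 2 : 𝕜) • α := by
  ext a
  have := sum_sum_mul_symmetrizedProduct hσ hh.inv β a
  rw [heq, sum_sum_mul_symmetrizedProduct hh hh.inv, sum_sum_inv_mul_self hh hdet, htr,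
    mulVec_inv_mulVec hdet] at this
  simp only [Pi.smul_apply, smul_eq_mul]
  linear_combination -this

theorem two_mul_smul_eq_card_smul (hh : h.IsSymm) (hσ : σ.IsSymm) (hdet : IsUnit h.det)
    (heq : symmetrizedProduct β σ = symmetrizedProduct α h)
    (htr : ∑ b, ∑ c, h⁻¹ b c * σ b c = 0) (hβ : β ⬝ᵥ h⁻¹ *ᵥ β = 0) :
    (2 * (α ⬝ᵥ h⁻¹ *ᵥ β)) • h = (Fintype.card ι : 𝕜) • (vecMulVec α β + vecMulVec β α) := by
  have hc := contract_eq_of_symmetrizedProduct_eq hh hσ heq (h⁻¹ *ᵥ β)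
  rw [mulVec_inv_mulVec hdet, hβ, zero_smul, add_zero] at hc
  have hs := two_smul_mulVec_inv_mulVec hh hσ hdet heq htr
  ext a b
  have hab := congrFun (congrFun hc a) b
  have ha := congrFun hs a
  have hb := congrFun hs b
  simp only [Matrix.add_apply, Matrix.smul_apply, vecMulVec_apply, Pi.smul_apply, smul_eq_mul]
    at hab ha hb ⊢
  linear_combination (-2) * hab + β a * hb + β b * ha

theorem dotProduct_inv_mulVec_self_eq_zero [CharZero 𝕜] (hn : Fintype.card ι = 2)
    (hh : h.IsSymm) (hσ : σ.IsSymm) (hdet : IsUnit h.det)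
    (heq : symmetrizedProduct β σ = symmetrizedProduct α h)
    (htr : ∑ b, ∑ c, h⁻¹ b c * σ b c = 0) (hβ : β ⬝ᵥ h⁻¹ *ᵥ β = 0)
    (hF : α ⬝ᵥ h⁻¹ *ᵥ β ≠ 0) :
    α ⬝ᵥ h⁻¹ *ᵥ α = 0 := by
  have hm := congrArg (fun M => (h⁻¹ *ᵥ α) ⬝ᵥ M *ᵥ (h⁻¹ *ᵥ α))
    (two_mul_smul_eq_card_smul hh hσ hdet heq htr hβ)
  simp only [smul_mulVec, add_mulVec, dotProduct_smul, dotProduct_add, mulVec_inv_mulVec hdet,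
    dotProduct_vecMulVec_mulVec, hn, Nat.cast_ofNat, smul_eq_mul] at hm
  rw [dotProduct_comm (h⁻¹ *ᵥ α) β, IsSymm.dotProduct_mulVec_comm hh.inv β α] at hm
  have : 2 * (α ⬝ᵥ h⁻¹ *ᵥ β) * (α ⬝ᵥ h⁻¹ *ᵥ α) = 0 := by linear_combination -hm
  simpa [hF] using this

theorem smul_eq_two_smul_vecMulVec [CharZero 𝕜] (hh : h.IsSymm) (hσ : σ.IsSymm)
    (hdet : IsUnit h.det) (heq : symmetrizedProduct β σ = symmetrizedProduct α h)
    (hα : α ⬝ᵥ h⁻¹ *ᵥ α = 0) (hF : α ⬝ᵥ h⁻¹ *ᵥ β ≠ 0) :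
    (α ⬝ᵥ h⁻¹ *ᵥ β) • σ = (2 : 𝕜) • vecMulVec α α := by
  set F := α ⬝ᵥ h⁻¹ *ᵥ β
  set a := h⁻¹ *ᵥ α
  have hβa : β ⬝ᵥ a = F := IsSymm.dotProduct_mulVec_comm hh.inv β α
  have hc := contract_eq_of_symmetrizedProduct_eq hh hσ heq a
  rw [mulVec_inv_mulVec hdet, hα, zero_smul, add_zero, hβa] at hc
  have ht : (σ *ᵥ a ⬝ᵥ a) • β + (2 * F) • σ *ᵥ a = 0 := by
    have := congrArg (· *ᵥ a) hc
    simp only [add_mulVec, smul_mulVec, vecMulVec_mulVec, op_smul_eq_smul, hβa, hα, zero_smul,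
      add_zero] at this
    rw [← this]
    module
  have hta : σ *ᵥ a ⬝ᵥ a = 0 := by
    have := congrArg (a ⬝ᵥ ·) ht
    simp only [dotProduct_add, dotProduct_smul, dotProduct_zero, smul_eq_mul] at this
    rw [dotProduct_comm a β, hβa, dotProduct_comm a (σ *ᵥ a)] at this
    have : 3 * F * (σ *ᵥ a ⬝ᵥ a) = 0 := by linear_combination this
    simpa [hF] using this
  have ht0 : σ *ᵥ a = 0 := by
    rw [hta, zero_smul, zero_add, smul_eq_zero] at ht
    simpa [hF] using ht
  rw [ht0, vecMulVec_zero, zero_vecMulVec, zero_add, zero_add] at hc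
  rw [hc, two_smul]

end

theorem pairing_eq_dotProduct (h : Matrix (Fin 2) (Fin 2) ℝ) (u v : Fin 2 → ℝ) :
    pairing h u v = u ⬝ᵥ h⁻¹ *ᵥ v := by
  simp only [pairing, dotProduct, mulVec, Finset.mul_sum]
  refine Finset.sum_congr rfl fun a _ => Finset.sum_congr rfl fun b _ => ?_
  ring

theorem isUnit_det_of_pairing_ne_zero {h : Matrix (Fin 2) (Fin 2) ℝ} {u v : Fin 2 → ℝ}
    (huv : pairing h u v ≠ 0) : IsUnit h.det := by
  by_contra hdet
  simp [pairing, nonsing_inv_apply_not_isUnit h hdet] at huv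

theorem three_dimensional_mixed_case_general
    (h : Matrix (Fin 2) (Fin 2) ℝ) (hsymm : ∀ a b, h a b = h b a)
    (β : Fin 2 → ℝ) (hβnull : pairing h β β = 0)
    (σ : Matrix (Fin 2) (Fin 2) ℝ) (hσsymm : ∀ a b, σ a b = σ b a)
    (hσtr : ∑ a, ∑ b, h⁻¹ a b * σ a b = 0)
    (α : Fin 2 → ℝ) (hF : pairing h α β ≠ 0)
    (heq : ∀ a b c,
      β a * σ b c + β b * σ c a + β c * σ a b =
        α a * h b c + α b * h c a + α c * h a b) :
    pairing h α α = 0 ∧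
    (∀ a b, h a b = (α a * β b + β a * α b) / pairing h α β) ∧
    (∀ a b, σ a b = 2 * α a * α b / pairing h α β) := by
  have hdet := isUnit_det_of_pairing_ne_zero hF
  have hh : h.IsSymm := IsSymm.ext fun a b => hsymm b a
  have hσ : σ.IsSymm := IsSymm.ext fun a b => hσsymm b a
  have hsym : symmetrizedProduct β σ = symmetrizedProduct α h :=
    funext fun a => funext fun b => funext fun c => heq a b c
  simp only [pairing_eq_dotProduct] at hβnull hF ⊢
  have hα := dotProduct_inv_mulVec_self_eq_zero (Fintype.card_fin 2) hh hσ hdet hsym hσtr hβnull hF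
  have hhform := two_mul_smul_eq_card_smul hh hσ hdet hsym hσtr hβnull
  have hσform := smul_eq_two_smul_vecMulVec hh hσ hdet hsym hα hF
  refine ⟨hα, fun a b => ?_, fun a b => ?_⟩
  · have hab := congrFun (congrFun hhform a) b
    simp only [Matrix.smul_apply, Matrix.add_apply, vecMulVec_apply, Fintype.card_fin,
      smul_eq_mul] at hab
    rw [eq_div_iff hF]
    linear_combination hab / 2
  · have hab := congrFun (congrFun hσform a) b
    simp only [Matrix.smul_apply, vecMulVec_apply, smul_eq_mul] at hab
    rw [eq_div_iff hF]
    linear_combination hab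

/-- case (c) of Proposition 5 of the paper, spacetime dimension m = 3:
for a signature-(1,1) metric `h`, a nonzero null `β`, a traceless symmetric `σ` and `α`
with `F = ⟨α,β⟩ ≠ 0` satisfying
`β_a σ_bc + β_b σ_ca + β_c σ_ab = α_a h_bc + α_b h_ca + α_c h_ab`,
one has `⟨α,α⟩ = 0`, `h_ab = (α_a β_b + β_a α_b)/F` and `σ_ab = 2 α_a α_b / F`. -/
theorem three_dimensional_mixed_case
    (h : Matrix (Fin 2) (Fin 2) ℝ) (hsymm : ∀ a b, h a b = h b a)
    (hdet : h.det < 0)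
    (β : Fin 2 → ℝ) (hβ0 : β ≠ 0) (hβnull : pairing h β β = 0)
    (σ : Matrix (Fin 2) (Fin 2) ℝ) (hσsymm : ∀ a b, σ a b = σ b a)
    (hσtr : ∑ a, ∑ b, h⁻¹ a b * σ a b = 0)
    (α : Fin 2 → ℝ) (hF : pairing h α β ≠ 0)
    (heq : ∀ a b c,
      β a * σ b c + β b * σ c a + β c * σ a b =
        α a * h b c + α b * h c a + α c * h a b) :
    pairing h α α = 0 ∧
    (∀ a b, h a b = (α a * β b + β a * α b) / pairing h α β) ∧
    (∀ a b, σ a b = 2 * α a * α b / pairing h α β) :=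
  three_dimensional_mixed_case_general h hsymm β hβnull σ hσsymm hσtr α hF heq

end
end

section
/- Let Ψ and c be smooth real functions on U such that: (i) the symmetric tensor field K_{αβ} = e^Ψ n_α n_β is a conformal Killing tensor of g with factor Ω_α = 2 c e^Ψ n_α; (ii) n^α ∂_α Ψ = 2c on U; and (iii) D_τ Ψ = 2 φ^{−1} D_τ φ for all τ. Then the covector field V_α = e^{Ψ/2} n_α is a conformal Killing vector of g with factor c e^{Ψ/2}, i.e. ∇_α V_β + ∇_β V_α = 2 c e^{Ψ/2} g_{αβ} on U. -/
open scoped BigOperators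

noncomputable section

variable {ι : Type*} [Fintype ι] [DecidableEq ι]

variable {m : ℕ}

section Aux

variable {E : Type*} [NormedAddCommGroup E] [NormedSpace ℝ E]

lemma diffAt_det {n : Type*} [Fintype n] [DecidableEq n]
    {M : E → Matrix n n ℝ} {x : E}
    (h : ∀ i j, DifferentiableAt ℝ (fun y => M y i j) x) :
    DifferentiableAt ℝ (fun y => (M y).det) x := by
  have heq : (fun y => (M y).det) =
      fun y => ∑ σ : Equiv.Perm n, ((Equiv.Perm.sign σ : ℤ) : ℝ) * ∏ i, M y (σ i) i := by
    funext y
    rw [Matrix.det_apply]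
    simp [Units.smul_def, zsmul_eq_mul]
  rw [heq]
  refine DifferentiableAt.fun_sum fun σ _ => DifferentiableAt.const_mul ?_ _
  exact (HasFDerivAt.finset_prod (fun i _ => (h (σ i) i).hasFDerivAt)).differentiableAt

lemma diffAt_adjugate {n : Type*} [Fintype n] [DecidableEq n]
    {M : E → Matrix n n ℝ} {x : E}
    (h : ∀ i j, DifferentiableAt ℝ (fun y => M y i j) x) (i j : n) :
    DifferentiableAt ℝ (fun y => (M y).adjugate i j) x := by
  have heq : (fun y => (M y).adjugate i j) =
      fun y => ((M y).updateRow j (Pi.single i 1)).det := by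
    funext y; rw [Matrix.adjugate_apply]
  rw [heq]
  refine diffAt_det fun p q => ?_
  have heq2 : (fun y => (M y).updateRow j (Pi.single i 1) p q) =
      fun y => if p = j then (Pi.single i (1 : ℝ) : n → ℝ) q else M y p q := by
    funext y; rw [Matrix.updateRow_apply]
  rw [heq2]
  by_cases hpj : p = j
  · simp [hpj]
  · simp only [hpj, if_false]; exact h p q

end Aux

/-- Proposition 7 of the paper: if `e^Ψ n_α n_β` is a conformal Killing
tensor with factor `2 c e^Ψ n_α`, and `n^α ∂_α Ψ = 2c`, `D_τ Ψ = 2 φ^{−1} D_τ φ`,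
then `e^{Ψ/2} n_α` is a conformal Killing vector with factor `c e^{Ψ/2}`. -/
theorem umbilic_reducible_ckt_gives_ckv
    {m : ℕ} (U : Set (Fin (m + 2) → ℝ)) (hUo : IsOpen U) (hUc : IsConnected U)
    (g : (Fin (m + 2) → ℝ) → Matrix (Fin (m + 2)) (Fin (m + 2)) ℝ)
    (hg : IsMetricOn U g) (ε : ℝ) (hfol : AdaptedFoliation U g ε)
    (Ψ c : (Fin (m + 2) → ℝ) → ℝ)
    (hΨ : ContDiffOn ℝ (⊤ : ℕ∞) Ψ U) (hc : ContDiffOn ℝ (⊤ : ℕ∞) c U)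
    (hCKT : IsCKT U g
      (fun x a b => Real.exp (Ψ x) * nCov g x a * nCov g x b)
      (fun x a => 2 * c x * Real.exp (Ψ x) * nCov g x a))
    (hnormal : ∀ x ∈ U, (∑ a, nCon g x a * pd a Ψ x) = 2 * c x)
    (htangent : ∀ x ∈ U, ∀ τ,
      Dscal g ε Ψ τ x = 2 * (lapse g x)⁻¹ * Dscal g ε (fun y => lapse g y) τ x) :
    IsCKV U g
      (fun x a => Real.exp (Ψ x / 2) * nCov g x a)
      (fun x => c x * Real.exp (Ψ x / 2)) := by
  obtain ⟨hgsmooth, hgsym, hgdet⟩ := hg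
  intro x hx a b
  -- basic nonvanishing facts
  have hge : (g x)⁻¹ 0 0 ≠ 0 := by
    intro h
    have h2 := hfol.2 x hx
    rw [h, mul_zero] at h2
    exact lt_irrefl 0 h2
  have hsq : 0 < Real.sqrt |(g x)⁻¹ 0 0| := Real.sqrt_pos.2 (abs_pos.2 hge)
  have hφpos : 0 < lapse g x := by
    unfold lapse; positivity
  have hFne : Real.exp (Ψ x / 2) * lapse g x ≠ 0 :=
    ne_of_gt (mul_pos (Real.exp_pos _) hφpos)
  -- differentiability
  have hgd : ∀ i j, DifferentiableAt ℝ (fun y => g y i j) x := fun i j =>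
    ((hgsmooth i j).contDiffAt (hUo.mem_nhds hx)).differentiableAt (by simp)
  have hdetne : (g x).det ≠ 0 := (hgdet x hx).ne_zero
  have hinv : DifferentiableAt ℝ (fun y => (g y)⁻¹ 0 0) x := by
    have heq : (fun y => (g y)⁻¹ 0 0) =
        fun y => ((g y).det)⁻¹ * (g y).adjugate 0 0 := by
      funext y
      rw [Matrix.inv_def]
      simp [Ring.inverse_eq_inv']
    rw [heq]
    exact ((diffAt_det hgd).inv hdetne).mul (diffAt_adjugate hgd 0 0)
  have hlapse : DifferentiableAt ℝ (fun y => lapse g y) x := by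
    have heq : (fun y => lapse g y) = fun y => (Real.sqrt |(g y)⁻¹ 0 0|)⁻¹ := by
      funext y; simp [lapse]
    rw [heq]
    exact ((hinv.abs hge).sqrt (ne_of_gt (abs_pos.2 hge))).inv (ne_of_gt hsq)
  have hΨd : DifferentiableAt ℝ Ψ x :=
    (hΨ.contDiffAt (hUo.mem_nhds hx)).differentiableAt (by simp)
  have hΨd2 : DifferentiableAt ℝ (fun y => Ψ y / 2) x := by
    have heq : (fun y => Ψ y / 2) = fun y => Ψ y * (1 / 2 : ℝ) := by funext y; ring
    rw [heq]; exact hΨd.mul_const _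
  have hFd : DifferentiableAt ℝ (fun y => Real.exp (Ψ y / 2) * lapse g y) x :=
    (Real.differentiable_exp.differentiableAt.comp x hΨd2).mul hlapse
  -- pd computations
  have hpd0 : ∀ l : Fin (m + 2), pd l (fun _ : Fin (m + 2) → ℝ => (0 : ℝ)) x = 0 := by
    intro l; simp [pd]
  have hpdF2 : ∀ l : Fin (m + 2),
      pd l (fun y => (Real.exp (Ψ y / 2) * lapse g y) * (Real.exp (Ψ y / 2) * lapse g y)) x
        = 2 * (Real.exp (Ψ x / 2) * lapse g x) *
            pd l (fun y => Real.exp (Ψ y / 2) * lapse g y) x := by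
    intro l
    simp only [pd, fderiv_fun_mul hFd hFd, ContinuousLinearMap.add_apply,
      ContinuousLinearMap.smul_apply, smul_eq_mul]
    ring
  -- function identities
  have hK0 : ∀ p q : Fin (m + 2), p ≠ 0 ∨ q ≠ 0 →
      (fun y => Real.exp (Ψ y) * nCov g y p * nCov g y q) =
        (fun _ : Fin (m + 2) → ℝ => (0 : ℝ)) := by
    intro p q h
    funext y
    rcases h with h | h
    · simp [nCov, h]
    · simp [nCov, h]
  have hK00 : (fun y => Real.exp (Ψ y) * nCov g y 0 * nCov g y 0) =
      (fun y => (Real.exp (Ψ y / 2) * lapse g y) * (Real.exp (Ψ y / 2) * lapse g y)) := by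
    funext y
    simp only [nCov, if_true, eq_self_iff_true, if_pos]
    rw [show Ψ y = Ψ y / 2 + Ψ y / 2 by ring, Real.exp_add]
    ring
  have hV0 : ∀ p : Fin (m + 2), p ≠ 0 →
      (fun y => Real.exp (Ψ y / 2) * nCov g y p) =
        (fun _ : Fin (m + 2) → ℝ => (0 : ℝ)) := by
    intro p h; funext y; simp [nCov, h]
  have hVF : (fun y => Real.exp (Ψ y / 2) * nCov g y 0) =
      (fun y => Real.exp (Ψ y / 2) * lapse g y) := by
    funext y; simp [nCov]
  have hE : Real.exp (Ψ x) = Real.exp (Ψ x / 2) * Real.exp (Ψ x / 2) := by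
    rw [← Real.exp_add]; norm_num
  simp only [covd1]
  by_cases ha : a = 0 <;> by_cases hb : b = 0
  · subst ha; subst hb
    have H := hCKT x hx 0 0 0
    simp only [covd2] at H
    rw [hK00, hpdF2 0] at H
    rw [hE] at H
    simp only [nCov, mul_ite, mul_zero, mul_one, ite_mul, zero_mul, if_pos rfl,
      Finset.sum_ite_eq', Finset.mem_univ, if_true, Finset.sum_const_zero] at H
    rw [hVF]
    simp only [nCov, mul_ite, mul_zero, mul_one, ite_mul, zero_mul, if_pos rfl,
      Finset.sum_ite_eq', Finset.mem_univ, if_true, Finset.sum_const_zero]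
    refine mul_right_cancel₀ hFne ?_
    linear_combination (1 / 3 : ℝ) * H
  · subst ha
    have H := hCKT x hx b 0 0
    simp only [covd2] at H
    rw [hK00, hpdF2 b, hK0 0 b (Or.inr hb), hK0 b 0 (Or.inl hb), hpd0 0] at H
    rw [hE] at H
    simp only [nCov, mul_ite, mul_zero, mul_one, ite_mul, zero_mul, if_pos rfl, hb, if_false,
      Finset.sum_ite_eq', Finset.mem_univ, if_true, Finset.sum_const_zero] at H
    rw [hVF, hV0 b hb, hpd0 0]
    simp only [nCov, mul_ite, mul_zero, mul_one, ite_mul, zero_mul, if_pos rfl, hb, if_false,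
      Finset.sum_ite_eq', Finset.mem_univ, if_true, Finset.sum_const_zero]
    refine mul_right_cancel₀ hFne ?_
    linear_combination (1 / 2 : ℝ) * H -
      (c x * Real.exp (Ψ x / 2) * Real.exp (Ψ x / 2) * lapse g x) * (hgsym x hx 0 b)
  · subst hb
    have H := hCKT x hx a 0 0
    simp only [covd2] at H
    rw [hK00, hpdF2 a, hK0 0 a (Or.inr ha), hK0 a 0 (Or.inl ha), hpd0 0] at H
    rw [hE] at H
    simp only [nCov, mul_ite, mul_zero, mul_one, ite_mul, zero_mul, if_pos rfl, ha, if_false,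
      Finset.sum_ite_eq', Finset.mem_univ, if_true, Finset.sum_const_zero] at H
    rw [hVF, hV0 a ha, hpd0 0]
    simp only [nCov, mul_ite, mul_zero, mul_one, ite_mul, zero_mul, if_pos rfl, ha, if_false,
      Finset.sum_ite_eq', Finset.mem_univ, if_true, Finset.sum_const_zero]
    refine mul_right_cancel₀ hFne ?_
    linear_combination (1 / 2 : ℝ) * H +
      (c x * Real.exp (Ψ x / 2) * Real.exp (Ψ x / 2) * lapse g x) * (hgsym x hx 0 a)
  · have H := hCKT x hx a b 0
    simp only [covd2] at H
    rw [hK0 b 0 (Or.inl hb), hK0 0 a (Or.inr ha), hK0 a b (Or.inl ha),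
      hpd0 a, hpd0 b, hpd0 0] at H
    rw [hE] at H
    simp only [nCov, mul_ite, mul_zero, mul_one, ite_mul, zero_mul, if_pos rfl, ha, hb, if_false,
      Finset.sum_ite_eq', Finset.mem_univ, if_true, Finset.sum_const_zero] at H
    rw [hV0 a ha, hV0 b hb, hpd0 a, hpd0 b]
    simp only [nCov, mul_ite, mul_zero, mul_one, ite_mul, zero_mul, if_pos rfl, ha, hb, if_false,
      Finset.sum_ite_eq', Finset.mem_univ, if_true, Finset.sum_const_zero]
    refine mul_right_cancel₀ hFne ?_
    linear_combination H

end
end
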